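/- arXiv:2108.04365 — 9 statements merged into one kernel-verified Lean document; each statement's English description precedes it below -/
import Mathlib

section
/- Let p ∈ frontier Z be a simple nondegenerate point with associated neighborhood U_p. Then the following four conditions are equivalent: (1) p is KŁ nondegenerate; (2) p is weakly KŁ nondegenerate; (3) there exist a compact set K ⊆ U_p that is a neighborhood of p and ρ > 0 such that the function α^K is Lebesgue integrable on (0, ρ); (4) there exist an open neighborhood U of p, ρ > 0, and a function a : ℝ → ℝ that is continuous and strictly positive on (0, ρ] with t ↦ (a t)⁻¹ Lebesgue integrable on (0, ρ), such that ‖∇f x‖ ≥ a (f x) for every x ∈ U with 0 < f x ≤ ρ. -/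
open Set MeasureTheory

variable {n : ℕ}

noncomputable def alphaK (f : EuclideanSpace ℝ (Fin n) → ℝ)
    (K : Set (EuclideanSpace ℝ (Fin n))) (t : ℝ) : ℝ :=
  sSup {y : ℝ | ∃ x ∈ K, f x = t ∧ y = ‖gradient f x‖⁻¹}

def KLNondeg (f : EuclideanSpace ℝ (Fin n) → ℝ) (p : EuclideanSpace ℝ (Fin n)) : Prop :=
  ∃ ρ > (0:ℝ), ∃ U : Set (EuclideanSpace ℝ (Fin n)), IsOpen U ∧ p ∈ U ∧
    ∃ Ψ : ℝ → ℝ, Ψ 0 = 0 ∧ ContinuousOn Ψ (Ico 0 ρ) ∧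
      (∀ t ∈ Ioo (0:ℝ) ρ, DifferentiableAt ℝ Ψ t) ∧
      (∀ t ∈ Ioo (0:ℝ) ρ, 0 < deriv Ψ t) ∧
      ContinuousOn (deriv Ψ) (Ioo 0 ρ) ∧
      ∀ x ∈ U, 0 < f x → f x < ρ → 1 ≤ deriv Ψ (f x) * ‖gradient f x‖

def WeakKLNondeg (f : EuclideanSpace ℝ (Fin n) → ℝ) (p : EuclideanSpace ℝ (Fin n)) : Prop :=
  ∃ ρ > (0:ℝ), ∃ U : Set (EuclideanSpace ℝ (Fin n)), IsOpen U ∧ p ∈ U ∧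
    ∃ ψ : ℝ → ℝ, (∀ t, 0 ≤ ψ t) ∧ IntegrableOn ψ (Ioo 0 ρ) ∧
      ∃ D : Set ℝ, MeasurableSet D ∧ D ⊆ Ioo 0 ρ ∧ volume (Ioo 0 ρ \ D) = 0 ∧
        ∀ x ∈ U, f x ∈ D → 1 ≤ ψ (f x) * ‖gradient f x‖


/-!
(1) ⇒ (2): take `ψ = Ψ'`, integrable near `0` since `Ψ` is monotone and continuous at `0`.
(2) ⇒ (3): on a closed ball `K` around `p`, `α^K ≤ ψ` almost everywhere; `α^K` is upper
semicontinuous on `t ≠ 0` because the level sets of `f` in `K` are compact and `‖∇f‖⁻¹` is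
continuous off `Z`, so it is measurable and dominated by `ψ`.
(3) ⇒ (4): by Vitali–Carathéodory, the upper semicontinuous integrable `max α^K 1` lies below an
integrable lower semicontinuous function, and a continuous `φ` can be inserted between the two;
take `a = φ⁻¹`.
(4) ⇒ (1): take `Ψ t = ∫₀ᵗ a⁻¹`.
-/

open Filter Topology
open scoped ENNReal

section Semicontinuity

variable {X : Type*} [TopologicalSpace X]

-- `G ≥ 0` is needed because an empty fiber contributes `sSup ∅ = 0`.
theorem upperSemicontinuousOn_sSup_image_fiber {f G : X → ℝ} {K : Set X} {s : Set ℝ}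
    (hf : Continuous f) (hK : IsCompact K) (hs : IsOpen s)
    (hG : UpperSemicontinuousOn G (K ∩ f ⁻¹' s)) (hG0 : ∀ x, 0 ≤ G x) :
    UpperSemicontinuousOn (fun t => sSup (G '' (K ∩ f ⁻¹' {t}))) s := by
  intro t₀ ht₀ y hy
  obtain ⟨N, hN, hNc, hNs⟩ := exists_mem_nhds_isClosed_subset (hs.mem_nhds ht₀)
  have hKN : IsCompact (K ∩ f ⁻¹' N) := hK.inter_right (hNc.preimage hf)
  have hGN : UpperSemicontinuousOn G (K ∩ f ⁻¹' N) :=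
    hG.mono (inter_subset_inter_right _ (preimage_mono hNs))
  obtain ⟨y', hy'₀, hy'⟩ := exists_between hy
  have hy'0 : 0 ≤ y' := (Real.sSup_nonneg (by rintro _ ⟨x, -, rfl⟩; exact hG0 x)).trans hy'₀.le
  -- the points of `K` at levels in `N` where `G ≥ y'` form a compact set missing the level `t₀`
  set A := K ∩ f ⁻¹' N ∩ G ⁻¹' Ici y'
  have hA : IsClosed (f '' A) := ((hGN.isCompact_inter_preimage_Ici hKN y').image hf).isClosed
  have ht₀A : t₀ ∉ f '' A := by
    rintro ⟨x, ⟨⟨hxK, hxN⟩, hxy⟩, hxt⟩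
    have hfiber : K ∩ f ⁻¹' {t₀} ⊆ K ∩ f ⁻¹' N := fun z ⟨hzK, hzt⟩ =>
      ⟨hzK, mem_preimage.2 (mem_singleton_iff.1 hzt ▸ hxt ▸ hxN)⟩
    have hbdd := (hGN.mono hfiber).bddAbove_of_isCompact
      (hK.inter_right (isClosed_singleton.preimage hf))
    exact (le_csSup hbdd (mem_image_of_mem G ⟨hxK, hxt⟩)).not_gt (hy'₀.trans_le hxy)
  filter_upwards [mem_nhdsWithin_of_mem_nhds (hA.isOpen_compl.mem_nhds ht₀A),
    mem_nhdsWithin_of_mem_nhds hN] with t htA htN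
  refine lt_of_le_of_lt (Real.sSup_le ?_ hy'0) hy'
  rintro _ ⟨x, ⟨hxK, hxt⟩, rfl⟩
  by_contra hlt
  exact htA ⟨x, ⟨⟨hxK, mem_preimage.2 (mem_singleton_iff.1 hxt ▸ htN)⟩, le_of_not_ge hlt⟩, hxt⟩

theorem exists_continuous_lt_lt_of_upperSemicontinuous_of_lowerSemicontinuous
    [NormalSpace X] [ParacompactSpace X] {u : X → ℝ} {v : X → EReal}
    (hu : UpperSemicontinuous u) (hv : LowerSemicontinuous v) (huv : ∀ x, (u x : EReal) < v x) :
    ∃ φ : C(X, ℝ), ∀ x, u x < φ x ∧ (φ x : EReal) < v x := by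
  refine exists_continuous_forall_mem_convex_of_local_const
    (t := fun x => Ioi (u x) ∩ {c : ℝ | (c : EReal) < v x}) (fun x => ?_) fun x => ?_
  · refine (ordConnected_Ioi.inter ⟨fun a _ b hb c hc => ?_⟩).convex
    exact lt_of_le_of_lt (EReal.coe_le_coe_iff.2 hc.2) hb
  · obtain ⟨c, huc, hcv⟩ := EReal.lt_iff_exists_real_btwn.1 (huv x)
    exact ⟨c, (hu x c (EReal.coe_lt_coe_iff.1 huc)).and (hv x c hcv)⟩

theorem UpperSemicontinuousOn.aestronglyMeasurable [MeasurableSpace X] [OpensMeasurableSpace X]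
    {μ : Measure X} {u : X → ℝ} {s : Set X} (hu : UpperSemicontinuousOn u s)
    (hs : MeasurableSet s) : AEStronglyMeasurable u (μ.restrict s) :=
  ((aemeasurable_restrict_iff_comap_subtype hs).2
    (upperSemicontinuousOn_iff_restrict.2 hu).measurable.aemeasurable).aestronglyMeasurable

end Semicontinuity

theorem exists_continuousOn_gt_integrableOn {X : Type*} [MetricSpace X] [MeasurableSpace X]
    [BorelSpace X] {μ : Measure X} [μ.WeaklyRegular] {s : Set X} (hs : MeasurableSet s)
    (hμs : μ s ≠ ∞) {u : X → ℝ} (hu : UpperSemicontinuousOn u s) (hint : IntegrableOn u s μ) :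
    ∃ φ : X → ℝ, ContinuousOn φ s ∧ (∀ x ∈ s, u x < φ x) ∧ IntegrableOn φ s μ := by
  classical
  have : IsFiniteMeasure (μ.restrict s) := isFiniteMeasure_restrict.2 hμs
  have : (μ.restrict s).WeaklyRegular := Measure.WeaklyRegular.restrict_of_measure_ne_top hμs
  obtain ⟨g, hug, hg, hg_int, hg_top, -⟩ :=
    exists_lt_lowerSemicontinuous_integral_lt u hint one_pos
  obtain ⟨φ, hφ⟩ := exists_continuous_lt_lt_of_upperSemicontinuous_of_lowerSemicontinuous
    (upperSemicontinuousOn_iff_restrict.2 hu)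
    (lowerSemicontinuous_restrict_iff.2 (hg.lowerSemicontinuousOn s)) fun x => hug x
  set ψ : X → ℝ := fun x => if hx : x ∈ s then φ ⟨x, hx⟩ else 0
  have hψ : ∀ x (hx : x ∈ s), ψ x = φ ⟨x, hx⟩ := fun x hx => dif_pos hx
  have hψc : ContinuousOn ψ s := by
    rw [continuousOn_iff_continuous_domRestrict]
    convert φ.continuous using 1
    ext ⟨x, hx⟩
    exact hψ x hx
  refine ⟨ψ, hψc, fun x hx => hψ x hx ▸ (hφ ⟨x, hx⟩).1, ?_⟩
  refine (hint.norm.add hg_int.norm).mono' (hψc.aestronglyMeasurable hs) ?_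
  filter_upwards [ae_restrict_mem hs, hg_top] with x hx hgx
  obtain ⟨hux, hxg⟩ : u x < ψ x ∧ (ψ x : EReal) < g x := hψ x hx ▸ hφ ⟨x, hx⟩
  have hxg' : ψ x < (g x).toReal :=
    EReal.coe_lt_coe_iff.1 (hxg.trans_le (EReal.le_coe_toReal hgx.ne))
  change |ψ x| ≤ |u x| + |(g x).toReal|
  rw [abs_le]
  constructor <;> linarith [neg_abs_le (u x), le_abs_self (g x).toReal, abs_nonneg (u x),
    abs_nonneg (g x).toReal]

theorem exists_hasDerivAt_of_integrableOn_Ioo {w : ℝ → ℝ} {a b : ℝ}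
    (hw : IntegrableOn w (Ioo a b)) (hwc : ContinuousOn w (Ioo a b)) :
    ∃ Ψ : ℝ → ℝ, Ψ a = 0 ∧ Continuous Ψ ∧ ∀ t ∈ Ioo a b, HasDerivAt Ψ (w t) t := by
  have hw' : Integrable ((Ioo a b).indicator w) := hw.integrable_indicator measurableSet_Ioo
  refine ⟨fun t => ∫ s in a..t, (Ioo a b).indicator w s, intervalIntegral.integral_same,
    intervalIntegral.continuous_primitive (fun _ _ => hw'.intervalIntegrable) a, fun t ht => ?_⟩
  have hcont : ContinuousAt ((Ioo a b).indicator w) t :=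
    (hwc.continuousAt (isOpen_Ioo.mem_nhds ht)).congr <| by
      filter_upwards [isOpen_Ioo.mem_nhds ht] with s hs
      exact (indicator_of_mem hs w).symm
  simpa [indicator_of_mem ht] using intervalIntegral.integral_hasDerivAt_right
    hw'.intervalIntegrable hw'.aestronglyMeasurable.stronglyMeasurableAtFilter hcont

theorem ContDiffOn.continuousOn_gradient {F : Type*} [NormedAddCommGroup F]
    [InnerProductSpace ℝ F] [CompleteSpace F] {f : F → ℝ} {s : Set F} (hf : ContDiffOn ℝ 1 f s)
    (hs : IsOpen s) : ContinuousOn (gradient f) s :=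
  (InnerProductSpace.toDual ℝ F).symm.continuous.comp_continuousOn
    (hf.continuousOn_fderiv_of_isOpen hs le_rfl)

def HasIntegrableAlphaK (f : EuclideanSpace ℝ (Fin n) → ℝ) (Up : Set (EuclideanSpace ℝ (Fin n)))
    (p : EuclideanSpace ℝ (Fin n)) : Prop :=
  ∃ K : Set (EuclideanSpace ℝ (Fin n)), IsCompact K ∧ K ⊆ Up ∧ K ∈ nhds p ∧
    ∃ ρ > (0:ℝ), IntegrableOn (alphaK f K) (Ioo 0 ρ)

def HasIntegrableGradientBound (f : EuclideanSpace ℝ (Fin n) → ℝ)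
    (p : EuclideanSpace ℝ (Fin n)) : Prop :=
  ∃ U : Set (EuclideanSpace ℝ (Fin n)), IsOpen U ∧ p ∈ U ∧
    ∃ ρ > (0:ℝ), ∃ a : ℝ → ℝ, ContinuousOn a (Ioc 0 ρ) ∧ (∀ t ∈ Ioc (0:ℝ) ρ, 0 < a t) ∧
      IntegrableOn (fun t => (a t)⁻¹) (Ioo 0 ρ) ∧
      ∀ x ∈ U, 0 < f x → f x ≤ ρ → a (f x) ≤ ‖gradient f x‖

section AlphaK

variable {f : EuclideanSpace ℝ (Fin n) → ℝ} {K Up : Set (EuclideanSpace ℝ (Fin n))}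
  {p : EuclideanSpace ℝ (Fin n)}

theorem continuousOn_inv_norm_gradient (hf : Continuous f)
    (hC1 : ContDiffOn ℝ 1 f (f ⁻¹' {0})ᶜ) (hsimple : ∀ x ∈ Up, f x ≠ 0 → gradient f x ≠ 0) :
    ContinuousOn (fun x => ‖gradient f x‖⁻¹) (Up ∩ (f ⁻¹' {0})ᶜ) := by
  have hgrad := hC1.continuousOn_gradient (isClosed_singleton.preimage hf).isOpen_compl
  exact (hgrad.mono inter_subset_right).norm.inv₀ fun x hx =>
    norm_ne_zero_iff.2 (hsimple x hx.1 hx.2)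

theorem alphaK_eq_sSup_image (f : EuclideanSpace ℝ (Fin n) → ℝ)
    (K : Set (EuclideanSpace ℝ (Fin n))) (t : ℝ) :
    alphaK f K t = sSup ((fun x => ‖gradient f x‖⁻¹) '' (K ∩ f ⁻¹' {t})) := by
  simp only [alphaK, image, mem_inter_iff, mem_preimage, mem_singleton_iff, and_assoc, eq_comm]

theorem alphaK_nonneg (f : EuclideanSpace ℝ (Fin n) → ℝ) (K : Set (EuclideanSpace ℝ (Fin n)))
    (t : ℝ) : 0 ≤ alphaK f K t :=
  Real.sSup_nonneg <| by rintro _ ⟨x, -, -, rfl⟩; positivity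

theorem upperSemicontinuousOn_alphaK (hf : Continuous f) (hK : IsCompact K)
    (hG : ContinuousOn (fun x => ‖gradient f x‖⁻¹) (K ∩ (f ⁻¹' {0})ᶜ)) :
    UpperSemicontinuousOn (alphaK f K) {0}ᶜ := by
  simp_rw [funext (alphaK_eq_sSup_image f K)]
  exact upperSemicontinuousOn_sSup_image_fiber hf hK isOpen_compl_singleton
    hG.upperSemicontinuousOn fun x => by positivity

theorem inv_norm_gradient_le_alphaK (hf : Continuous f) (hK : IsCompact K)
    (hG : ContinuousOn (fun x => ‖gradient f x‖⁻¹) (K ∩ (f ⁻¹' {0})ᶜ))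
    {x : EuclideanSpace ℝ (Fin n)} (hxK : x ∈ K) (hx : f x ≠ 0) :
    ‖gradient f x‖⁻¹ ≤ alphaK f K (f x) := by
  rw [alphaK_eq_sSup_image]
  have hfiber : K ∩ f ⁻¹' {f x} ⊆ K ∩ (f ⁻¹' {0})ᶜ := fun z ⟨hzK, hzx⟩ =>
    ⟨hzK, fun hz0 => hx ((mem_singleton_iff.1 hzx).symm.trans hz0)⟩
  exact le_csSup ((hG.mono hfiber).upperSemicontinuousOn.bddAbove_of_isCompact
    (hK.inter_right (isClosed_singleton.preimage hf))) ⟨x, ⟨hxK, rfl⟩, rfl⟩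

theorem KLNondeg.weakKLNondeg (h : KLNondeg f p) : WeakKLNondeg f p := by
  obtain ⟨ρ, hρ, U, hU, hpU, Ψ, -, hΨc, hΨd, hΨpos, -, hKL⟩ := h
  have hsub : Ioo 0 (ρ / 2) ⊆ Ioo 0 ρ := Ioo_subset_Ioo_right (half_lt_self hρ).le
  -- `Ψ` is continuous on `[0, ρ / 2]`, but perhaps not at `ρ`
  have hint : IntegrableOn (deriv Ψ) (Ioc 0 (ρ / 2)) :=
    intervalIntegral.integrableOn_deriv_of_nonneg
      (hΨc.mono (Icc_subset_Ico_right (half_lt_self hρ)))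
      (fun t ht => (hΨd t (hsub ht)).hasDerivAt) fun t ht => (hΨpos t (hsub ht)).le
  refine ⟨ρ / 2, half_pos hρ, U, hU, hpU, (Ioo 0 (ρ / 2)).indicator (deriv Ψ),
    fun t => indicator_nonneg (fun t ht => (hΨpos t (hsub ht)).le) t, ?_,
    Ioo 0 (ρ / 2), measurableSet_Ioo, subset_rfl, by simp, fun x hx hfx => ?_⟩
  · exact (integrableOn_indicator_iff measurableSet_Ioo).2
      ((hint.mono_set Ioo_subset_Ioc_self).mono_set inter_subset_right)
  · rw [indicator_of_mem hfx]
    exact hKL x hx hfx.1 (hsub hfx).2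

theorem WeakKLNondeg.hasIntegrableAlphaK (hf : Continuous f) (hUp : IsOpen Up) (hpUp : p ∈ Up)
    (hG : ContinuousOn (fun x => ‖gradient f x‖⁻¹) (Up ∩ (f ⁻¹' {0})ᶜ))
    (h : WeakKLNondeg f p) : HasIntegrableAlphaK f Up p := by
  obtain ⟨ρ, hρ, U, hU, hpU, ψ, hψ0, hψint, D, -, hDsub, hDnull, hψ⟩ := h
  obtain ⟨r, hr, hball⟩ := Metric.nhds_basis_closedBall.mem_iff.1
    ((hUp.inter hU).mem_nhds ⟨hpUp, hpU⟩)
  set K := Metric.closedBall p r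
  have hK : IsCompact K := isCompact_closedBall p r
  have hKUp : K ⊆ Up := fun x hx => (hball hx).1
  refine ⟨K, hK, hKUp, Metric.closedBall_mem_nhds p hr, ρ, hρ, ?_⟩
  have hmeas : AEStronglyMeasurable (alphaK f K) (volume.restrict (Ioo 0 ρ)) :=
    ((upperSemicontinuousOn_alphaK hf hK (hG.mono (inter_subset_inter_left _ hKUp))).mono
      fun t ht => ht.1.ne').aestronglyMeasurable measurableSet_Ioo
  have hD : ∀ᵐ t ∂volume.restrict (Ioo 0 ρ), t ∈ D :=
    (ae_restrict_iff' measurableSet_Ioo).2 <| (measure_eq_zero_iff_ae_notMem.1 hDnull).mono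
      fun t ht htρ => by_contra fun htD => ht ⟨htρ, htD⟩
  refine hψint.mono' hmeas ?_
  filter_upwards [hD] with t htD
  rw [Real.norm_of_nonneg (alphaK_nonneg f K t), alphaK_eq_sSup_image]
  refine Real.sSup_le ?_ (hψ0 t)
  rintro _ ⟨x, ⟨hxK, hxt⟩, rfl⟩
  have hKL : 1 ≤ ψ t * ‖gradient f x‖ := mem_singleton_iff.1 hxt ▸ hψ x (hball hxK).2
    (mem_singleton_iff.1 hxt ▸ htD)
  have hpos : 0 < ‖gradient f x‖ := (norm_nonneg _).lt_of_ne fun h0 => by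
    rw [← h0, mul_zero] at hKL; linarith
  exact (inv_le_iff_one_le_mul₀ hpos).2 hKL

theorem HasIntegrableAlphaK.hasIntegrableGradientBound (hf : Continuous f)
    (hsimple : ∀ x ∈ Up, f x ≠ 0 → gradient f x ≠ 0)
    (hG : ContinuousOn (fun x => ‖gradient f x‖⁻¹) (Up ∩ (f ⁻¹' {0})ᶜ))
    (h : HasIntegrableAlphaK f Up p) : HasIntegrableGradientBound f p := by
  obtain ⟨K, hK, hKUp, hKp, ρ, hρ, hint⟩ := h
  have hGK := hG.mono (inter_subset_inter_left _ hKUp)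
  have husc : UpperSemicontinuousOn (fun t => alphaK f K t ⊔ 1) (Ioo 0 ρ) :=
    ((upperSemicontinuousOn_alphaK hf hK hGK).mono fun t ht => ht.1.ne').sup
      continuousOn_const.upperSemicontinuousOn
  obtain ⟨φ, hφc, hφu, hφint⟩ := exists_continuousOn_gt_integrableOn measurableSet_Ioo
    measure_Ioo_lt_top.ne husc (hint.sup (integrableOn_const measure_Ioo_lt_top.ne))
  have hφ1 : ∀ t ∈ Ioo 0 ρ, 1 < φ t := fun t ht => (le_sup_right).trans_lt (hφu t ht)
  have hsub : Ioc 0 (ρ / 2) ⊆ Ioo 0 ρ := fun t ht => ⟨ht.1, ht.2.trans_lt (half_lt_self hρ)⟩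
  refine ⟨interior K, isOpen_interior, mem_interior_iff_mem_nhds.2 hKp, ρ / 2, half_pos hρ,
    fun t => (φ t)⁻¹, (hφc.mono hsub).inv₀ fun t ht => (one_pos.trans (hφ1 t (hsub ht))).ne',
    fun t ht => inv_pos.2 (one_pos.trans (hφ1 t (hsub ht))), ?_, fun x hx hfx hfxρ => ?_⟩
  · simpa only [inv_inv] using hφint.mono_set (Ioo_subset_Ioo_right (half_lt_self hρ).le)
  · have hxK := interior_subset hx
    have hlt : ‖gradient f x‖⁻¹ < φ (f x) :=
      (inv_norm_gradient_le_alphaK hf hK hGK hxK hfx.ne').trans_lt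
        (le_sup_left.trans_lt (hφu _ (hsub ⟨hfx, hfxρ⟩)))
    exact (inv_lt_of_inv_lt₀ (norm_pos_iff.2 (hsimple x (hKUp hxK) hfx.ne')) hlt).le

theorem HasIntegrableGradientBound.klNondeg (h : HasIntegrableGradientBound f p) :
    KLNondeg f p := by
  obtain ⟨U, hU, hpU, ρ, hρ, a, hac, hapos, haint, ha⟩ := h
  have hinvc : ContinuousOn (fun t => (a t)⁻¹) (Ioo 0 ρ) :=
    (hac.mono Ioo_subset_Ioc_self).inv₀ fun t ht => (hapos t (Ioo_subset_Ioc_self ht)).ne'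
  obtain ⟨Ψ, hΨ0, hΨc, hΨ⟩ := exists_hasDerivAt_of_integrableOn_Ioo haint hinvc
  have hderiv : EqOn (deriv Ψ) (fun t => (a t)⁻¹) (Ioo 0 ρ) := fun t ht => (hΨ t ht).deriv
  refine ⟨ρ, hρ, U, hU, hpU, Ψ, hΨ0, hΨc.continuousOn, fun t ht => (hΨ t ht).differentiableAt,
    fun t ht => hderiv ht ▸ inv_pos.2 (hapos t (Ioo_subset_Ioc_self ht)),
    hinvc.congr hderiv, fun x hx hfx hfxρ => ?_⟩
  rw [hderiv ⟨hfx, hfxρ⟩, one_le_inv_mul₀ (hapos _ ⟨hfx, hfxρ.le⟩)]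
  exact ha x hx hfx hfxρ.le

end AlphaK

theorem KL_characterization_general (n : ℕ)
    (f : EuclideanSpace ℝ (Fin n) → ℝ)
    (hf : Continuous f)
    (hC1 : ContDiffOn ℝ 1 f (f ⁻¹' {0})ᶜ)
    (p : EuclideanSpace ℝ (Fin n))
    (Up : Set (EuclideanSpace ℝ (Fin n))) (hUp : IsOpen Up) (hpUp : p ∈ Up)
    (hsimple : ∀ x ∈ Up, f x ≠ 0 → gradient f x ≠ 0) :
    List.TFAE [KLNondeg f p, WeakKLNondeg f p,
      (∃ K : Set (EuclideanSpace ℝ (Fin n)), IsCompact K ∧ K ⊆ Up ∧ K ∈ nhds p ∧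
        ∃ ρ > (0:ℝ), IntegrableOn (alphaK f K) (Ioo 0 ρ)),
      (∃ U : Set (EuclideanSpace ℝ (Fin n)), IsOpen U ∧ p ∈ U ∧
        ∃ ρ > (0:ℝ), ∃ a : ℝ → ℝ, ContinuousOn a (Ioc 0 ρ) ∧ (∀ t ∈ Ioc (0:ℝ) ρ, 0 < a t) ∧
          IntegrableOn (fun t => (a t)⁻¹) (Ioo 0 ρ) ∧
          ∀ x ∈ U, 0 < f x → f x ≤ ρ → a (f x) ≤ ‖gradient f x‖)] := by
  have hG := continuousOn_inv_norm_gradient hf hC1 hsimple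
  tfae_have 1 → 2 := KLNondeg.weakKLNondeg
  tfae_have 2 → 3 := WeakKLNondeg.hasIntegrableAlphaK hf hUp hpUp hG
  tfae_have 3 → 4 := HasIntegrableAlphaK.hasIntegrableGradientBound hf hsimple hG
  tfae_have 4 → 1 := HasIntegrableGradientBound.klNondeg
  tfae_finish

theorem KL_characterization (n : ℕ) (hn : 1 ≤ n)
    (f : EuclideanSpace ℝ (Fin n) → ℝ)
    (hf : Continuous f) (hf0 : ∀ x, 0 ≤ f x)
    (hZ : (f ⁻¹' {0}).Nonempty)
    (hC1 : ContDiffOn ℝ 1 f (f ⁻¹' {0})ᶜ)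
    (p : EuclideanSpace ℝ (Fin n)) (hp : p ∈ frontier (f ⁻¹' {0}))
    (Up : Set (EuclideanSpace ℝ (Fin n))) (hUp : IsOpen Up) (hpUp : p ∈ Up)
    (hsimple : ∀ x ∈ Up, f x ≠ 0 → gradient f x ≠ 0) :
    List.TFAE [KLNondeg f p, WeakKLNondeg f p,
      (∃ K : Set (EuclideanSpace ℝ (Fin n)), IsCompact K ∧ K ⊆ Up ∧ K ∈ nhds p ∧
        ∃ ρ > (0:ℝ), IntegrableOn (alphaK f K) (Ioo 0 ρ)),
      (∃ U : Set (EuclideanSpace ℝ (Fin n)), IsOpen U ∧ p ∈ U ∧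
        ∃ ρ > (0:ℝ), ∃ a : ℝ → ℝ, ContinuousOn a (Ioc 0 ρ) ∧ (∀ t ∈ Ioc (0:ℝ) ρ, 0 < a t) ∧
          IntegrableOn (fun t => (a t)⁻¹) (Ioo 0 ρ) ∧
          ∀ x ∈ U, 0 < f x → f x ≤ ρ → a (f x) ≤ ‖gradient f x‖)] :=
  KL_characterization_general n f hf hC1 p Up hUp hpUp hsimple
end

section
/- Let p ∈ frontier Z be a simple nondegenerate point with associated neighborhood U_p, and assume p is weakly KŁ nondegenerate with data (ρ, U, ψ, D). Then for every compact set K ⊆ U ∩ U_p that is a neighborhood of p, the function α^K is Lebesgue integrable on (0, ρ). -/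
open Set MeasureTheory

variable {n : ℕ}

theorem weakKL_implies_alpha_integrable (n : ℕ) (hn : 1 ≤ n)
    (f : EuclideanSpace ℝ (Fin n) → ℝ)
    (hf : Continuous f) (hf0 : ∀ x, 0 ≤ f x)
    (hZ : (f ⁻¹' {0}).Nonempty)
    (hC1 : ContDiffOn ℝ 1 f (f ⁻¹' {0})ᶜ)
    (p : EuclideanSpace ℝ (Fin n)) (hp : p ∈ frontier (f ⁻¹' {0}))
    -- simple nondegeneracy with associated neighborhood Up
    (Up : Set (EuclideanSpace ℝ (Fin n))) (hUp : IsOpen Up) (hpUp : p ∈ Up)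
    (hsimple : ∀ x ∈ Up, f x ≠ 0 → gradient f x ≠ 0)
    -- weak KŁ nondegeneracy with data (ρ, U, ψ, D)
    (ρ : ℝ) (hρ : 0 < ρ)
    (U : Set (EuclideanSpace ℝ (Fin n))) (hU : IsOpen U) (hpU : p ∈ U)
    (ψ : ℝ → ℝ) (hψ0 : ∀ t, 0 ≤ ψ t) (hψint : IntegrableOn ψ (Ioo 0 ρ))
    (D : Set ℝ) (hD : MeasurableSet D) (hDsub : D ⊆ Ioo 0 ρ)
    (hDfull : volume (Ioo 0 ρ \ D) = 0)
    (hKL : ∀ x ∈ U, f x ∈ D → 1 ≤ ψ (f x) * ‖gradient f x‖) :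
    ∀ K : Set (EuclideanSpace ℝ (Fin n)), IsCompact K → K ⊆ U ∩ Up → K ∈ nhds p →
      IntegrableOn (alphaK f K) (Ioo 0 ρ) := by
  intro K hK hKsub hKnhds
  have hZc : IsOpen (f ⁻¹' {0})ᶜ := (isClosed_singleton.preimage hf).isOpen_compl
  set W : Set (EuclideanSpace ℝ (Fin n)) := (f ⁻¹' {0})ᶜ ∩ Up with hWdef
  have hWopen : IsOpen W := hZc.inter hUp
  set g : EuclideanSpace ℝ (Fin n) → ℝ := fun x => ‖gradient f x‖⁻¹ with hgdef
  -- continuity of the (inverse norm of the) gradient on W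
  have hgradcont : ContinuousOn (fun x => gradient f x) (f ⁻¹' {0})ᶜ := by
    have h1 := hC1.continuousOn_fderiv_of_isOpen hZc le_rfl
    exact (InnerProductSpace.toDual ℝ (EuclideanSpace ℝ (Fin n))).symm.continuous.comp_continuousOn h1
  have hgrad_ne : ∀ x ∈ W, gradient f x ≠ 0 := fun x hx =>
    hsimple x hx.2 (by simpa using hx.1)
  have hgcont : ContinuousOn g W := by
    refine ContinuousOn.inv₀ (hgradcont.mono inter_subset_left).norm ?_
    intro x hx
    simpa using hgrad_ne x hx
  have hgnonneg : ∀ x, 0 ≤ g x := fun x => inv_nonneg.2 (norm_nonneg _)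
  -- the slices
  have hSsub : ∀ t : ℝ, t ≠ 0 → K ∩ f ⁻¹' {t} ⊆ W := by
    intro t ht x hx
    refine ⟨fun h => ht ?_, (hKsub hx.1).2⟩
    have hfx : f x = t := hx.2
    have hfx0 : f x = 0 := h
    rw [← hfx, hfx0]
  have hScompact : ∀ t : ℝ, IsCompact (K ∩ f ⁻¹' {t}) :=
    fun t => hK.inter_right (isClosed_singleton.preimage hf)
  have hset : ∀ t : ℝ, {y : ℝ | ∃ x ∈ K, f x = t ∧ y = ‖gradient f x‖⁻¹}
      = g '' (K ∩ f ⁻¹' {t}) := by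
    intro t; ext y
    constructor
    · rintro ⟨x, hxK, hfx, rfl⟩
      exact ⟨x, ⟨hxK, hfx⟩, rfl⟩
    · rintro ⟨x, ⟨hxK, hfx⟩, rfl⟩
      exact ⟨x, hxK, hfx, rfl⟩
  have himg : ∀ t : ℝ, t ≠ 0 → IsCompact (g '' (K ∩ f ⁻¹' {t})) :=
    fun t ht => (hScompact t).image_of_continuousOn (hgcont.mono (hSsub t ht))
  have halpha_nonneg : ∀ t : ℝ, 0 ≤ alphaK f K t := by
    intro t
    apply Real.sSup_nonneg
    rintro y ⟨x, -, -, rfl⟩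
    exact hgnonneg x
  -- membership lower bound
  have hle : ∀ t : ℝ, t ≠ 0 → ∀ x ∈ K, f x = t → g x ≤ alphaK f K t := by
    intro t ht x hxK hfx
    have hbdd : BddAbove {y : ℝ | ∃ x ∈ K, f x = t ∧ y = ‖gradient f x‖⁻¹} := by
      rw [hset t]; exact (himg t ht).bddAbove
    exact le_csSup hbdd ⟨x, hxK, hfx, rfl⟩
  -- attainment
  have hattain : ∀ t : ℝ, t ≠ 0 → (K ∩ f ⁻¹' {t}).Nonempty →
      ∃ x ∈ K, f x = t ∧ alphaK f K t = g x := by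
    intro t ht hne
    have h1 : alphaK f K t ∈ g '' (K ∩ f ⁻¹' {t}) := by
      rw [alphaK, hset t]
      exact (himg t ht).sSup_mem (hne.image g)
    rcases h1 with ⟨x, ⟨hxK, hfx⟩, hx⟩
    exact ⟨x, hxK, hfx, hx.symm⟩
  have hempty : ∀ t : ℝ, (K ∩ f ⁻¹' {t}) = ∅ → alphaK f K t = 0 := by
    intro t h
    rw [alphaK, hset t, h, image_empty, Real.sSup_empty]
  -- measurability of the indicator version
  set ind : ℝ → ℝ := (Ioo 0 ρ).indicator (alphaK f K) with hinddef
  have hind_nonneg : ∀ t, 0 ≤ ind t := fun t =>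
    Set.indicator_nonneg (fun s _ => halpha_nonneg s) t
  have hindmeas : Measurable ind := by
    apply measurable_of_Ici
    intro c
    rcases le_or_gt c 0 with hc | hc
    · have : ind ⁻¹' Ici c = univ := by
        ext t; simp only [mem_preimage, mem_Ici, mem_univ, iff_true]
        exact hc.trans (hind_nonneg t)
      rw [this]; exact MeasurableSet.univ
    · -- superlevel set as a countable union of images of compact sets
      have hkey : ind ⁻¹' Ici c = Ioo 0 ρ ∩
          ⋃ k : ℕ, f '' (K ∩ f ⁻¹' (Ici ((k : ℝ) + 1)⁻¹) ∩ g ⁻¹' (Ici c)) := by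
        ext t
        simp only [mem_preimage, mem_Ici, mem_inter_iff, mem_iUnion]
        constructor
        · intro ht
          have htI : t ∈ Ioo 0 ρ := by
            by_contra h
            rw [hinddef, Set.indicator_of_notMem h] at ht
            exact absurd ht (not_le.2 hc)
          rw [hinddef, Set.indicator_of_mem htI] at ht
          have htne : t ≠ 0 := ne_of_gt htI.1
          have hne : (K ∩ f ⁻¹' {t}).Nonempty := by
            rcases eq_empty_or_nonempty (K ∩ f ⁻¹' {t}) with h | h
            · rw [hempty t h] at ht; exact absurd ht (not_le.2 hc)
            · exact h
          obtain ⟨x, hxK, hfx, hax⟩ := hattain t htne hne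
          obtain ⟨k, hk⟩ := exists_nat_one_div_lt htI.1
          refine ⟨htI, k, x, ⟨⟨hxK, ?_⟩, ?_⟩, hfx⟩
          · simp only [mem_preimage, mem_Ici, hfx]
            rw [one_div] at hk
            exact le_of_lt hk
          · simp only [mem_preimage, mem_Ici]
            rw [← hax]; exact ht
        · rintro ⟨htI, k, x, ⟨⟨hxK, -⟩, hgx⟩, hfx⟩
          rw [hinddef, Set.indicator_of_mem htI]
          simp only [mem_preimage, mem_Ici] at hgx
          exact hgx.trans (hle t (ne_of_gt htI.1) x hxK hfx)
      rw [hkey]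
      refine measurableSet_Ioo.inter (MeasurableSet.iUnion fun k => ?_)
      -- each set is compact
      set C := K ∩ f ⁻¹' (Ici ((k : ℝ) + 1)⁻¹) ∩ g ⁻¹' (Ici c) with hCdef
      have hApos : (0 : ℝ) < ((k : ℝ) + 1)⁻¹ := by positivity
      have hAclosed : IsClosed (K ∩ f ⁻¹' (Ici ((k : ℝ) + 1)⁻¹)) :=
        hK.isClosed.inter (isClosed_Ici.preimage hf)
      have hCclosed : IsClosed C := by
        apply isClosed_of_closure_subset
        intro x hx
        have hxA : x ∈ K ∩ f ⁻¹' (Ici ((k : ℝ) + 1)⁻¹) := by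
          have := closure_mono (show C ⊆ K ∩ f ⁻¹' (Ici ((k : ℝ) + 1)⁻¹) from
            inter_subset_left) hx
          rwa [hAclosed.closure_eq] at this
        have hxW : x ∈ W := by
          refine ⟨?_, (hKsub hxA.1).2⟩
          have : ((k : ℝ) + 1)⁻¹ ≤ f x := hxA.2
          simp only [mem_compl_iff, mem_preimage, mem_singleton_iff]
          intro h
          rw [h] at this
          exact absurd this (not_le.2 hApos)
        have hgc : ContinuousAt g x := hgcont.continuousAt (hWopen.mem_nhds hxW)
        have hmem : g x ∈ closure (g '' C) := mem_closure_image hgc hx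
        have : g '' C ⊆ Ici c := by
          rintro y ⟨z, hz, rfl⟩
          exact hz.2
        have hgx : g x ∈ Ici c := isClosed_Ici.closure_subset (closure_mono this hmem)
        exact ⟨hxA, hgx⟩
      have hCcompact : IsCompact C :=
        hK.of_isClosed_subset hCclosed (hCdef ▸ inter_subset_left.trans inter_subset_left)
      exact (hCcompact.image hf).isClosed.measurableSet
  -- a.e. measurability of alphaK on (0, ρ)
  have hmeas : AEStronglyMeasurable (alphaK f K) (volume.restrict (Ioo 0 ρ)) := by
    refine hindmeas.aestronglyMeasurable.congr ?_
    filter_upwards [ae_restrict_mem measurableSet_Ioo] with t ht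
    rw [hinddef, Set.indicator_of_mem ht]
  -- a.e. t belongs to D
  have hD_ae : ∀ᵐ t ∂(volume.restrict (Ioo 0 ρ)), t ∈ D := by
    rw [ae_restrict_iff' measurableSet_Ioo]
    rw [ae_iff]
    have heq : {t : ℝ | ¬(t ∈ Ioo 0 ρ → t ∈ D)} = Ioo 0 ρ \ D := by
      ext t; simp [Set.mem_diff, Classical.not_imp, and_assoc]
    rw [heq]
    exact hDfull
  -- conclude by domination
  refine hψint.mono' hmeas ?_
  filter_upwards [hD_ae] with t ht
  rw [Real.norm_eq_abs, abs_of_nonneg (halpha_nonneg t)]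
  apply Real.sSup_le
  · rintro y ⟨x, hxK, hfx, rfl⟩
    have hx_in_U : x ∈ U := (hKsub hxK).1
    have hkl := hKL x hx_in_U (hfx ▸ ht)
    rw [hfx] at hkl
    have hpos : 0 < ‖gradient f x‖ := by
      by_contra h
      push_neg at h
      have : ‖gradient f x‖ = 0 := le_antisymm h (norm_nonneg _)
      rw [this, mul_zero] at hkl
      linarith
    rw [← one_div]
    exact (div_le_iff₀ hpos).2 hkl
  · exact hψ0 t
end

section
/- Let r₀ > 0 and let u : ℝ → ℝ be strictly positive on (0, r₀], lower semicontinuous on (0, r₀] (as a function on that set), and Lebesgue integrable on [a, r₀] for every a ∈ (0, r₀). Then there exists w : ℝ → ℝ that is continuous on (0, r₀], satisfies 0 < w t ≤ u t for every t ∈ (0, r₀], and such that the function u − w is Lebesgue integrable on (0, r₀). -/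
/-!
For `c ≥ 0` the Pasch–Hausdorff envelope `F_c x = inf_{y ∈ (0, r₀]} (u y + c |x - y|)` is a
`c`-Lipschitz minorant of `u`, positive because `u` is, nondecreasing in `c`, and (by lower
semicontinuity) tending to `u` pointwise as `c → ∞`. By dominated convergence, on each dyadic
piece `[r₀ / 2^(n+1), r₀ / 2^n]` some slope `k n` makes `∫ (u - F_{k n}) < 2⁻ⁿ`. The pieces are
locally finite in `(0, r₀]`, so a partition of unity gives a continuous slope `h ≥ k n` on the
`n`-th piece, and `w t = F_{h t} t` is the required minorant: continuous since `F` is jointly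
continuous in `(c, x)`, and `u - w ≤ u - F_{k n}` on the `n`-th piece.
-/

open Set MeasureTheory Filter Topology Metric

lemma exists_continuous_forall_le_of_locallyFinite {ι X : Type*} [TopologicalSpace X]
    [NormalSpace X] [ParacompactSpace X] {P : ι → Set X} (hP : LocallyFinite P) (k : ι → ℝ) :
    ∃ h : C(X, ℝ), ∀ i, ∀ x ∈ P i, k i ≤ h x := by
  obtain ⟨h, hh⟩ := exists_continuous_forall_mem_convex_of_local_const
    (t := fun x => ⋂ (i) (_ : x ∈ P i), Ici (k i))
    (fun x => convex_iInter fun i => convex_iInter fun _ => convex_Ici _) fun x => by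
      obtain ⟨U, hU, hfin⟩ := hP x
      obtain ⟨c, hc⟩ := (hfin.image k).bddAbove
      refine ⟨c, ?_⟩
      filter_upwards [hU] with y hy
      simp only [mem_iInter, mem_Ici]
      exact fun i hi => hc ⟨i, ⟨y, hi, hy⟩, rfl⟩
  exact ⟨h, fun i x hx => by simpa using mem_iInter₂.1 (hh x) i hx⟩

lemma integrableOn_iUnion_of_norm_le {α ι E : Type*} [MeasurableSpace α] [Countable ι]
    [NormedAddCommGroup E] {μ : Measure α} {P : ι → Set α} (hP : ∀ i, MeasurableSet (P i))
    {f : α → E} {g : ι → α → ℝ} {ε : ι → ℝ} (hf : ∀ i, AEStronglyMeasurable f (μ.restrict (P i)))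
    (hg : ∀ i, IntegrableOn (g i) (P i) μ) (hfg : ∀ i, ∀ x ∈ P i, ‖f x‖ ≤ g i x)
    (hgε : ∀ i, ∫ x in P i, g i x ∂μ ≤ ε i) (hε : Summable ε) : IntegrableOn f (⋃ i, P i) μ := by
  have hf_int (i : ι) : IntegrableOn f (P i) μ :=
    (hg i).mono' (hf i) (ae_restrict_of_forall_mem (hP i) (hfg i))
  refine integrableOn_iUnion_of_summable_integral_norm hf_int
    (hε.of_nonneg_of_le (fun i => integral_nonneg fun _ => norm_nonneg _) fun i => ?_)
  exact (setIntegral_mono_on (hf_int i).norm (hg i) (hP i) (hfg i)).trans (hgε i)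

/-- For `c < 0` (or `u` unbounded below on `s`) the infimum may be over a set unbounded below,
where `⨅` returns the junk value `0`; hence the hypotheses `0 ≤ c` and `0 ≤ u` below. -/
noncomputable def lipschitzEnvelope {α : Type*} [PseudoMetricSpace α] (s : Set α) (u : α → ℝ)
    (c : ℝ) (x : α) : ℝ :=
  ⨅ y : s, u y + c * dist x y

section LipschitzEnvelope

variable {α : Type*} [PseudoMetricSpace α] {s : Set α} {u : α → ℝ} {c c' : ℝ} {x : α}

lemma bddBelow_range_add_mul_dist (hu : ∀ y ∈ s, 0 ≤ u y) (hc : 0 ≤ c) (x : α) :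
    BddBelow (range fun y : s => u y + c * dist x y) :=
  ⟨0, by rintro _ ⟨y, rfl⟩; have := hu y y.2; positivity⟩

lemma lipschitzEnvelope_nonneg (hu : ∀ y ∈ s, 0 ≤ u y) (hc : 0 ≤ c) :
    0 ≤ lipschitzEnvelope s u c x :=
  Real.iInf_nonneg fun y => by have := hu y y.2; positivity

lemma lipschitzEnvelope_le (hu : ∀ y ∈ s, 0 ≤ u y) (hc : 0 ≤ c) (hx : x ∈ s) :
    lipschitzEnvelope s u c x ≤ u x := by
  simpa [lipschitzEnvelope] using ciInf_le (bddBelow_range_add_mul_dist hu hc x) ⟨x, hx⟩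

lemma lipschitzEnvelope_mono (hu : ∀ y ∈ s, 0 ≤ u y) (hc : 0 ≤ c) (hcc' : c ≤ c') :
    lipschitzEnvelope s u c x ≤ lipschitzEnvelope s u c' x :=
  ciInf_mono (bddBelow_range_add_mul_dist hu hc x) fun _ => by gcongr

lemma lipschitzWith_lipschitzEnvelope (hu : ∀ y ∈ s, 0 ≤ u y) (hc : 0 ≤ c) :
    LipschitzWith c.toNNReal (lipschitzEnvelope s u c) := by
  refine LipschitzWith.of_le_add_mul' c fun x x' => ?_
  rcases isEmpty_or_nonempty s with hs | hs
  · simp [lipschitzEnvelope, Real.iInf_of_isEmpty]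
    positivity
  rw [← sub_le_iff_le_add]
  refine le_ciInf fun y => ?_
  rw [sub_le_iff_le_add]
  calc lipschitzEnvelope s u c x ≤ u y + c * dist x y :=
        ciInf_le (bddBelow_range_add_mul_dist hu hc x) y
    _ ≤ u y + c * dist x' y + c * dist x x' := by
        rw [add_assoc, ← mul_add, add_comm (dist x' y)]
        gcongr
        exact dist_triangle _ _ _

lemma lipschitzOnWith_lipschitzEnvelope_const {R : ℝ} (hu : ∀ y ∈ s, 0 ≤ u y)
    (hR : ∀ y ∈ s, dist x y ≤ R) :
    LipschitzOnWith R.toNNReal (fun c => lipschitzEnvelope s u c x) (Ici 0) := by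
  rcases isEmpty_or_nonempty s with hs | hs
  · simp only [lipschitzEnvelope, Real.iInf_of_isEmpty]
    exact (LipschitzWith.const 0).lipschitzOnWith.weaken (by positivity)
  refine LipschitzOnWith.of_le_add_mul' R fun c hc c' hc' => ?_
  rw [← sub_le_iff_le_add]
  refine le_ciInf fun y => ?_
  rw [sub_le_iff_le_add]
  calc lipschitzEnvelope s u c x ≤ u y + c * dist x y :=
        ciInf_le (bddBelow_range_add_mul_dist hu hc x) y
    _ ≤ u y + c' * dist x y + R * dist c c' := by
        have hcc' : c - c' ≤ dist c c' := (le_abs_self _).trans_eq (Real.dist_eq _ _).symm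
        have hy := hR y y.2
        nlinarith [dist_nonneg (x := x) (y := y), dist_nonneg (x := c) (y := c')]

lemma continuousOn_lipschitzEnvelope (hs : Bornology.IsBounded s) (hu : ∀ y ∈ s, 0 ≤ u y) :
    ContinuousOn (fun p : ℝ × α => lipschitzEnvelope s u p.1 p.2) (Ici 0 ×ˢ univ) := by
  rintro ⟨c₀, x₀⟩ ⟨hc₀, -⟩
  obtain ⟨R, hR⟩ := hs.subset_closedBall x₀
  have hLip := lipschitzOnWith_lipschitzEnvelope_const (x := x₀) hu fun y hy => by
    simpa [dist_comm] using hR hy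
  set g : ℝ × α → ℝ := fun p => p.1 * dist p.2 x₀ + R.toNNReal * dist p.1 c₀
  have hg : Tendsto g (𝓝[Ici 0 ×ˢ univ] (c₀, x₀)) (𝓝 0) := by
    have : Continuous g := by fun_prop
    simpa [g] using (this.tendsto (c₀, x₀)).mono_left nhdsWithin_le_nhds
  rw [ContinuousWithinAt, tendsto_iff_dist_tendsto_zero]
  refine squeeze_zero' (Eventually.of_forall fun _ => dist_nonneg) ?_ hg
  filter_upwards [self_mem_nhdsWithin] with ⟨c, x⟩ hc
  replace hc : 0 ≤ c := hc.1
  calc dist (lipschitzEnvelope s u c x) (lipschitzEnvelope s u c₀ x₀)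
      ≤ dist (lipschitzEnvelope s u c x) (lipschitzEnvelope s u c x₀)
        + dist (lipschitzEnvelope s u c x₀) (lipschitzEnvelope s u c₀ x₀) := dist_triangle _ _ _
    _ ≤ c * dist x x₀ + R.toNNReal * dist c c₀ := by
        gcongr
        · simpa [Real.coe_toNNReal _ hc] using
            (lipschitzWith_lipschitzEnvelope hu hc).dist_le_mul x x₀
        · exact hLip.dist_le_mul c hc c₀ hc₀

/-- Near `x` the values of `u` exceed `u x - ε`; points at distance `≥ δ` are charged `c * δ`. -/
lemma exists_pos_forall_min_le_lipschitzEnvelope (hu : ∀ y ∈ s, 0 ≤ u y)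
    (hlsc : LowerSemicontinuousWithinAt u s x) (hx : x ∈ s) {ε : ℝ} (hε : 0 < ε) :
    ∃ δ > 0, ∀ c, 0 ≤ c → min (u x - ε) (c * δ) ≤ lipschitzEnvelope s u c x := by
  have : Nonempty s := ⟨⟨x, hx⟩⟩
  obtain ⟨δ, hδ, hball⟩ := Metric.mem_nhdsWithin_iff.1 (hlsc (u x - ε) (by linarith))
  refine ⟨δ, hδ, fun c hc => le_ciInf fun y => ?_⟩
  have hy₀ := hu y y.2
  by_cases hyx : dist (y : α) x < δ
  · have : u x - ε < u y := hball ⟨hyx, y.2⟩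
    have : 0 ≤ c * dist x y := by positivity
    exact (min_le_left _ _).trans (by linarith)
  · have : c * δ ≤ c * dist x y := by rw [dist_comm]; gcongr; exact not_lt.1 hyx
    exact (min_le_right _ _).trans (by linarith)

lemma lipschitzEnvelope_pos (hu : ∀ y ∈ s, 0 < u y) (hlsc : LowerSemicontinuousWithinAt u s x)
    (hx : x ∈ s) (hc : 0 < c) : 0 < lipschitzEnvelope s u c x := by
  have hux := hu x hx
  obtain ⟨δ, hδ, hmin⟩ := exists_pos_forall_min_le_lipschitzEnvelope (fun y hy => (hu y hy).le)
    hlsc hx (half_pos hux)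
  exact (lt_min (by linarith) (by positivity)).trans_le (hmin c hc.le)

lemma tendsto_lipschitzEnvelope (hu : ∀ y ∈ s, 0 ≤ u y)
    (hlsc : LowerSemicontinuousWithinAt u s x) (hx : x ∈ s) :
    Tendsto (fun c => lipschitzEnvelope s u c x) atTop (𝓝 (u x)) := by
  refine tendsto_order.2 ⟨fun a ha => ?_, fun a ha => ?_⟩
  · obtain ⟨δ, hδ, hmin⟩ :=
      exists_pos_forall_min_le_lipschitzEnvelope hu hlsc hx (half_pos (sub_pos.2 ha))
    filter_upwards [(tendsto_id.atTop_mul_const hδ).eventually_gt_atTop a,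
      eventually_ge_atTop 0] with c hcδ hc
    exact (lt_min (by linarith) hcδ).trans_le (hmin c hc)
  · filter_upwards [eventually_ge_atTop 0] with c hc
    exact (lipschitzEnvelope_le hu hc hx).trans_lt ha

lemma exists_continuousOn_eq_lipschitzEnvelope {ι : Type*} (hs : Bornology.IsBounded s)
    (hu : ∀ y ∈ s, 0 ≤ u y) {P : ι → Set α} (hP : LocallyFinite fun i => ((↑) : s → α) ⁻¹' P i)
    (k : ι → ℝ) : ∃ w : α → ℝ, ContinuousOn w s ∧
      ∀ x ∈ s, ∃ c, 1 ≤ c ∧ (∀ i, x ∈ P i → k i ≤ c) ∧ w x = lipschitzEnvelope s u c x := by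
  classical
  obtain ⟨h, hh⟩ := exists_continuous_forall_le_of_locallyFinite hP k
  set c : C(s, ℝ) := h ⊔ 1
  have hc_one (x : s) : 1 ≤ c x := le_max_right (h x) 1
  refine ⟨fun x => if hx : x ∈ s then lipschitzEnvelope s u (c ⟨x, hx⟩) x else 0, ?_,
    fun x hx => ⟨c ⟨x, hx⟩, hc_one _,
      fun i hi => (hh i ⟨x, hx⟩ hi).trans (le_max_left _ _), dif_pos hx⟩⟩
  rw [continuousOn_iff_continuous_domRestrict]
  convert (continuousOn_lipschitzEnvelope hs hu).comp_continuous
    (c.continuous.prodMk continuous_subtype_val)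
    fun x => ⟨zero_le_one.trans (hc_one x), trivial⟩ using 1
  ext x
  exact dif_pos x.2

lemma abs_sub_lipschitzEnvelope_le (hu : ∀ y ∈ s, 0 ≤ u y) (hc : 0 ≤ c) (hx : x ∈ s) :
    |u x - lipschitzEnvelope s u c x| ≤ u x := by
  have h₁ := lipschitzEnvelope_nonneg (x := x) hu hc
  have h₂ := lipschitzEnvelope_le hu hc hx
  rw [abs_of_nonneg (by linarith)]
  linarith

section Measure

variable [MeasurableSpace α] [OpensMeasurableSpace α] {μ : Measure α} {A : Set α}

lemma integrableOn_sub_lipschitzEnvelope (hA : MeasurableSet A) (hAs : A ⊆ s)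
    (hu : ∀ y ∈ s, 0 ≤ u y) (hc : 0 ≤ c) (hint : IntegrableOn u A μ) :
    IntegrableOn (fun x => u x - lipschitzEnvelope s u c x) A μ :=
  hint.mono' (hint.aestronglyMeasurable.sub
    (lipschitzWith_lipschitzEnvelope hu hc).continuous.aestronglyMeasurable)
    (ae_restrict_of_forall_mem hA fun _ hx => abs_sub_lipschitzEnvelope_le hu hc (hAs hx))

lemma tendsto_setIntegral_sub_lipschitzEnvelope (hA : MeasurableSet A) (hAs : A ⊆ s)
    (hu : ∀ y ∈ s, 0 ≤ u y) (hlsc : LowerSemicontinuousOn u s) (hint : IntegrableOn u A μ) :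
    Tendsto (fun c => ∫ x in A, (u x - lipschitzEnvelope s u c x) ∂μ) atTop (𝓝 0) := by
  have hlim := tendsto_integral_filter_of_dominated_convergence (μ := μ.restrict A)
    (l := atTop) (F := fun c x => u x - lipschitzEnvelope s u c x) (f := 0) u ?_ ?_ hint ?_
  · simpa using hlim
  · filter_upwards [eventually_ge_atTop 0] with c hc
    exact (integrableOn_sub_lipschitzEnvelope hA hAs hu hc hint).aestronglyMeasurable
  · filter_upwards [eventually_ge_atTop 0] with c hc
    exact ae_restrict_of_forall_mem hA fun x hx => abs_sub_lipschitzEnvelope_le hu hc (hAs hx)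
  · filter_upwards [ae_restrict_mem hA] with x hx
    simpa using (tendsto_const_nhds (x := u x)).sub
      (tendsto_lipschitzEnvelope hu (hlsc x (hAs hx)) (hAs hx))

theorem exists_continuousOn_integrable_minorant_of_locallyFinite (hs : Bornology.IsBounded s)
    (hu : ∀ y ∈ s, 0 < u y) (hlsc : LowerSemicontinuousOn u s) {P : ℕ → Set α}
    (hPm : ∀ n, MeasurableSet (P n)) (hPs : ∀ n, P n ⊆ s) (hsP : s ⊆ ⋃ n, P n)
    (hP : LocallyFinite fun n => ((↑) : s → α) ⁻¹' P n) (hint : ∀ n, IntegrableOn u (P n) μ) :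
    ∃ w : α → ℝ, ContinuousOn w s ∧ (∀ x ∈ s, 0 < w x ∧ w x ≤ u x) ∧
      IntegrableOn (fun x => u x - w x) s μ := by
  have hu₀ : ∀ y ∈ s, 0 ≤ u y := fun y hy => (hu y hy).le
  have hk (n : ℕ) : ∃ c, ∫ x in P n, (u x - lipschitzEnvelope s u c x) ∂μ < 2⁻¹ ^ n ∧ 0 ≤ c :=
    (((tendsto_setIntegral_sub_lipschitzEnvelope (hPm n) (hPs n) hu₀ hlsc (hint n)).eventually
      (gt_mem_nhds (by positivity))).and (eventually_ge_atTop 0)).exists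
  choose k hk_int hk_nonneg using hk
  obtain ⟨w, hw_cont, hw⟩ := exists_continuousOn_eq_lipschitzEnvelope hs hu₀ hP k
  have hw_bounds (x : α) (hx : x ∈ s) : 0 < w x ∧ w x ≤ u x := by
    obtain ⟨c, hc, -, hwc⟩ := hw x hx
    rw [hwc]
    exact ⟨lipschitzEnvelope_pos hu (hlsc x hx) hx (by linarith),
      lipschitzEnvelope_le hu₀ (by linarith) hx⟩
  have hw_le (n : ℕ) (x : α) (hx : x ∈ P n) : lipschitzEnvelope s u (k n) x ≤ w x := by
    obtain ⟨c, -, hkc, hwc⟩ := hw x (hPs n hx)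
    exact hwc ▸ lipschitzEnvelope_mono hu₀ (hk_nonneg n) (hkc n hx)
  refine ⟨w, hw_cont, hw_bounds, (integrableOn_iUnion_of_norm_le hPm
    (fun n => (hint n).aestronglyMeasurable.sub
      ((hw_cont.mono (hPs n)).aestronglyMeasurable (hPm n)))
    (fun n => integrableOn_sub_lipschitzEnvelope (hPm n) (hPs n) hu₀ (hk_nonneg n) (hint n))
    (fun n x hx => ?_) (fun n => (hk_int n).le)
    (summable_geometric_of_lt_one (by norm_num) (by norm_num))).mono_set hsP⟩
  rw [Pi.sub_apply, Real.norm_of_nonneg (sub_nonneg.2 (hw_bounds x (hPs n hx)).2)]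
  exact sub_le_sub_left (hw_le n x hx) (u x)

end Measure

end LipschitzEnvelope

lemma locallyFinite_preimage_Iic_of_tendsto_zero {s : Set ℝ} (hs : s ⊆ Ioi 0) {a : ℕ → ℝ}
    (ha : Tendsto a atTop (𝓝 0)) : LocallyFinite fun n => ((↑) : s → ℝ) ⁻¹' Iic (a n) := by
  intro x
  have hx : 0 < (x : ℝ) := hs x.2
  refine ⟨{y | (x : ℝ) / 2 < y}, (isOpen_lt continuous_const continuous_subtype_val).mem_nhds
    (half_lt_self hx), ?_⟩
  have hsmall : ∀ᶠ n in cofinite, a n < x / 2 := by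
    rw [Nat.cofinite_eq_atTop]
    exact ha.eventually (gt_mem_nhds (half_pos hx))
  refine (eventually_cofinite.1 hsmall).subset ?_
  rintro n ⟨y, hyn, hy⟩
  exact not_lt.2 (hy.trans_le hyn).le

lemma Ioc_subset_iUnion_Icc_div_two_pow (r : ℝ) :
    Ioc 0 r ⊆ ⋃ n : ℕ, Icc (r / 2 ^ (n + 1)) (r / 2 ^ n) := by
  intro t ⟨ht, htr⟩
  obtain ⟨n, hn, hn'⟩ := exists_nat_pow_near ((one_le_div ht).2 htr) one_lt_two
  refine mem_iUnion.2 ⟨n, ?_, ?_⟩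
  · rw [div_le_iff₀ (by positivity)]
    rw [div_lt_iff₀ ht] at hn'
    linarith
  · rw [le_div_iff₀ ht] at hn
    rw [le_div_iff₀ (by positivity)]
    linarith

theorem continuous_integrable_minorant
    (r₀ : ℝ) (hr₀ : 0 < r₀) (u : ℝ → ℝ)
    (hu_pos : ∀ t ∈ Ioc (0:ℝ) r₀, 0 < u t)
    (hu_lsc : LowerSemicontinuousOn u (Ioc 0 r₀))
    (hu_int : ∀ a ∈ Ioo (0:ℝ) r₀, IntegrableOn u (Icc a r₀)) :
    ∃ w : ℝ → ℝ, ContinuousOn w (Ioc 0 r₀) ∧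
      (∀ t ∈ Ioc (0:ℝ) r₀, 0 < w t ∧ w t ≤ u t) ∧
      IntegrableOn (fun t => u t - w t) (Ioo 0 r₀) := by
  have hpow (n : ℕ) : r₀ / 2 ^ n ≤ r₀ := div_le_self hr₀.le (one_le_pow₀ one_le_two)
  obtain ⟨w, hw_cont, hw_bounds, hw_int⟩ :=
    exists_continuousOn_integrable_minorant_of_locallyFinite (μ := volume) (isBounded_Ioc 0 r₀)
      hu_pos hu_lsc (fun n => measurableSet_Icc)
      (fun n => Icc_subset_Ioc (by positivity) (hpow n)) (Ioc_subset_iUnion_Icc_div_two_pow r₀)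
      ((locallyFinite_preimage_Iic_of_tendsto_zero Ioc_subset_Ioi_self
        (tendsto_const_nhds.div_atTop (tendsto_pow_atTop_atTop_of_one_lt one_lt_two))).subset
        fun n => preimage_mono Icc_subset_Iic_self)
      fun n => (hu_int _ ⟨by positivity, div_lt_self hr₀ (one_lt_pow₀ one_lt_two n.succ_ne_zero)⟩
        ).mono_set (Icc_subset_Icc_right (hpow n))
  exact ⟨w, hw_cont, hw_bounds, hw_int.mono_set Ioo_subset_Ioc_self⟩
end

section
/- Let r₀ > 0 and let u : ℝ → ℝ be strictly positive on (0, r₀] and upper semicontinuous on (0, r₀] (as a function on that set). Then there exists w : ℝ → ℝ that is continuous on (0, r₀], satisfies w t ≥ u t > 0 for every t ∈ (0, r₀], and such that the function w − u is Lebesgue integrable on (0, r₀). -/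
/-!
On each compact interval `[r₀ / (k + 1), r₀]` the upper semicontinuous function `u` is the
pointwise limit of the `n`-Lipschitz majorants `t ↦ sup_s (u s - n |t - s|)`, so by
dominated convergence one of them, `V k`, exceeds `u` there by at most `2⁻ᵏ` in integral.
These are glued with the tent partition of unity `tent (r₀ / t - k)`, which is locally finite on
`(0, r₀]` and charges `V k` only where `t > r₀ / (k + 1)`; the error `w - u` is then a series of
nonnegative functions with summable integrals.
-/

open Set MeasureTheory Filter Topology

theorem UpperSemicontinuousOn.aemeasurable_restrict {X β : Type*} [TopologicalSpace X]
    [MeasurableSpace X] [OpensMeasurableSpace X] [LinearOrder β] [TopologicalSpace β]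
    [OrderTopology β] [SecondCountableTopology β] [MeasurableSpace β] [BorelSpace β]
    {f : X → β} {s : Set X} (hf : UpperSemicontinuousOn f s) (hs : MeasurableSet s)
    {μ : Measure X} : AEMeasurable f (μ.restrict s) :=
  aemeasurable_restrict_of_measurable_subtype hs
    (upperSemicontinuousOn_iff_restrict.mpr hf).measurable

theorem integrable_of_hasSum_of_nonneg {α : Type*} [MeasurableSpace α] {μ : Measure α}
    {f : ℕ → α → ℝ} {F : α → ℝ} (hf : ∀ i, Integrable (f i) μ) (hf0 : ∀ i, 0 ≤ᵐ[μ] f i)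
    (hF : ∀ᵐ a ∂μ, HasSum (fun i => f i a) (F a)) (hsum : Summable fun i => ∫ a, f i a ∂μ) :
    Integrable F μ := by
  have hf0' : ∀ᵐ a ∂μ, ∀ i, 0 ≤ f i a := ae_all_iff.2 hf0
  refine ⟨aestronglyMeasurable_of_tendsto_ae atTop
    (fun n => Finset.aestronglyMeasurable_sum _ fun i _ => (hf i).1)
    (hF.mono fun a ha => by simpa only [Finset.sum_apply] using ha.tendsto_sum_nat), ?_⟩
  have hF0 : 0 ≤ᵐ[μ] F := by
    filter_upwards [hF, hf0'] with a ha h0 using ha.nonneg h0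
  rw [hasFiniteIntegral_iff_ofReal hF0]
  calc ∫⁻ a, ENNReal.ofReal (F a) ∂μ = ∫⁻ a, ∑' i, ENNReal.ofReal (f i a) ∂μ := by
        refine lintegral_congr_ae ?_
        filter_upwards [hF, hf0'] with a ha h0
        rw [← ha.tsum_eq, ENNReal.ofReal_tsum_of_nonneg h0 ha.summable]
    _ = ∑' i, ENNReal.ofReal (∫ a, f i a ∂μ) := by
        rw [lintegral_tsum fun i => (hf i).1.aemeasurable.ennreal_ofReal]
        exact tsum_congr fun i => (ofReal_integral_eq_lintegral_ofReal (hf i) (hf0 i)).symm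
    _ = ENNReal.ofReal (∑' i, ∫ a, f i a ∂μ) :=
        (ENNReal.ofReal_tsum_of_nonneg (fun i => integral_nonneg_of_ae (hf0 i)) hsum).symm
    _ < ⊤ := ENNReal.ofReal_lt_top

section LipschitzMajorant

variable {X : Type*} [PseudoMetricSpace X] {K : Set X} {u : X → ℝ} {M : ℝ}

noncomputable def lipschitzMajorant (K : Set X) (u : X → ℝ) (n : ℕ) (t : X) : ℝ :=
  ⨆ s : K, u s - n * dist t s

theorem lipschitzMajorant_term_le (hM : ∀ s ∈ K, u s ≤ M) (n : ℕ) (t : X) (s : K) :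
    u s - n * dist t s ≤ M := by
  have := hM s s.2
  have : 0 ≤ (n : ℝ) * dist t s := by positivity
  linarith

theorem le_lipschitzMajorant (hM : ∀ s ∈ K, u s ≤ M) (n : ℕ) {t : X} (ht : t ∈ K) :
    u t ≤ lipschitzMajorant K u n t :=
  le_ciSup_of_le ⟨M, forall_mem_range.2 (lipschitzMajorant_term_le hM n t)⟩ ⟨t, ht⟩
    (by simp)

theorem lipschitzMajorant_le [Nonempty K] (hM : ∀ s ∈ K, u s ≤ M) (n : ℕ) (t : X) :
    lipschitzMajorant K u n t ≤ M :=
  ciSup_le (lipschitzMajorant_term_le hM n t)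

theorem lipschitzWith_lipschitzMajorant [Nonempty K] (hM : ∀ s ∈ K, u s ≤ M) (n : ℕ) :
    LipschitzWith n (lipschitzMajorant K u n) := by
  refine LipschitzWith.of_le_add_mul _ fun t t' => ciSup_le fun s => ?_
  have h_le : u s - n * dist t' s ≤ lipschitzMajorant K u n t' :=
    le_ciSup ⟨M, forall_mem_range.2 (lipschitzMajorant_term_le hM n t')⟩ s
  have h_tri : dist t' s ≤ dist t t' + dist t s := dist_triangle_left t' s t
  have hn : (0 : ℝ) ≤ n := n.cast_nonneg
  push_cast
  nlinarith

theorem tendsto_lipschitzMajorant (hM : ∀ s ∈ K, u s ≤ M) {t : X} (ht : t ∈ K)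
    (hu : UpperSemicontinuousWithinAt u K t) :
    Tendsto (fun n => lipschitzMajorant K u n t) atTop (𝓝 (u t)) := by
  have : Nonempty K := ⟨⟨t, ht⟩⟩
  refine tendsto_order.2 ⟨fun a ha => Eventually.of_forall fun n =>
    ha.trans_le (le_lipschitzMajorant hM n ht), fun b hb => ?_⟩
  obtain ⟨c, hc, hcb⟩ := exists_between hb
  obtain ⟨δ, hδ, hball⟩ := Metric.mem_nhdsWithin_iff.1 (hu c hc)
  filter_upwards [tendsto_natCast_atTop_atTop.eventually_gt_atTop ((M - b) / δ)] with n hn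
  have hnδ : M - n * δ < b := by
    rw [div_lt_iff₀ hδ] at hn
    linarith
  -- Points near `t` have `u s < c` by semicontinuity; far ones are penalised by at least `n * δ`.
  refine (ciSup_le fun s => ?_).trans_lt (max_lt hcb hnδ)
  have hn0 : (0 : ℝ) ≤ n * dist t s := by positivity
  rcases lt_or_ge (dist t s) δ with hts | hts
  · have : u s < c := hball ⟨by rwa [Metric.mem_ball, dist_comm], s.2⟩
    exact le_max_of_le_left (by linarith)
  · have : (n : ℝ) * δ ≤ n * dist t s := by gcongr
    exact le_max_of_le_right (by linarith [hM s s.2])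

end LipschitzMajorant

section Approximation

variable {X : Type*} [MetricSpace X] [MeasurableSpace X] [OpensMeasurableSpace X]
  {μ : Measure X} [IsFiniteMeasureOnCompacts μ] {K : Set X} {u : X → ℝ}

theorem exists_continuous_majorant_setIntegral_sub_le (hK : IsCompact K)
    (hu : UpperSemicontinuousOn u K) (hbdd : BddBelow (u '' K)) {ε : ℝ} (hε : 0 < ε) :
    ∃ V : X → ℝ, Continuous V ∧ (∀ t ∈ K, u t ≤ V t) ∧
      IntegrableOn (fun t => V t - u t) K μ ∧ ∫ t in K, V t - u t ∂μ ≤ ε := by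
  rcases K.eq_empty_or_nonempty with rfl | hne
  · exact ⟨0, continuous_const, by simp, by simp, by simpa using hε.le⟩
  have : Nonempty K := hne.to_subtype
  obtain ⟨M, hM⟩ := hu.bddAbove_of_isCompact hK
  obtain ⟨m, hm⟩ := hbdd
  have hM' : ∀ s ∈ K, u s ≤ M := fun s hs => hM ⟨s, hs, rfl⟩
  set v := lipschitzMajorant K u
  have h_meas : ∀ n, AEStronglyMeasurable (fun t => v n t - u t) (μ.restrict K) := fun n =>
    ((lipschitzWith_lipschitzMajorant hM' n).continuous.aemeasurable.sub
      (hu.aemeasurable_restrict hK.measurableSet)).aestronglyMeasurable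
  have h_bound : ∀ n, ∀ᵐ t ∂(μ.restrict K), ‖v n t - u t‖ ≤ M - m :=
    fun n => ae_restrict_of_forall_mem hK.measurableSet fun t ht => by
      rw [Real.norm_of_nonneg (sub_nonneg.2 (le_lipschitzMajorant hM' n ht))]
      linarith [lipschitzMajorant_le hM' n t, hm ⟨t, ht, rfl⟩]
  have h_int : IntegrableOn (fun _ => M - m) K μ := integrableOn_const hK.measure_lt_top.ne
  have h_lim : Tendsto (fun n => ∫ t in K, v n t - u t ∂μ) atTop (𝓝 0) := by
    simpa using tendsto_integral_of_dominated_convergence _ h_meas h_int h_bound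
      (ae_restrict_of_forall_mem hK.measurableSet fun t ht =>
        (tendsto_lipschitzMajorant hM' ht (hu t ht)).sub_const (u t))
  obtain ⟨n, hn⟩ := (h_lim.eventually (eventually_le_nhds hε)).exists
  exact ⟨v n, (lipschitzWith_lipschitzMajorant hM' n).continuous,
    fun t ht => le_lipschitzMajorant hM' n ht, h_int.mono' (h_meas n) (h_bound n), hn⟩

end Approximation

section Tent

noncomputable def tent (y : ℝ) : ℝ := max 0 (1 - |y|)

theorem continuous_tent : Continuous tent :=
  continuous_const.max (continuous_const.sub continuous_abs)

theorem tent_nonneg (y : ℝ) : 0 ≤ tent y := le_max_left _ _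

theorem tent_le_one (y : ℝ) : tent y ≤ 1 :=
  max_le zero_le_one (by linarith [abs_nonneg y])

theorem tent_of_abs_le_one {y : ℝ} (h : |y| ≤ 1) : tent y = 1 - |y| :=
  max_eq_right (by linarith)

theorem tent_of_one_le_abs {y : ℝ} (h : 1 ≤ |y|) : tent y = 0 :=
  max_eq_left (by linarith)

theorem tent_sub_eq_zero_of_add_one_le {y z : ℝ} (h : y + 1 ≤ z) : tent (y - z) = 0 :=
  tent_of_one_le_abs (le_abs.2 (Or.inr (by linarith)))

theorem tent_sub_eq_zero_of_add_one_le' {y z : ℝ} (h : z + 1 ≤ y) : tent (y - z) = 0 :=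
  tent_of_one_le_abs (le_abs.2 (Or.inl (by linarith)))

theorem hasSum_tent_sub_natCast {y : ℝ} (hy : 0 ≤ y) :
    HasSum (fun k : ℕ => tent (y - k)) 1 := by
  set n := ⌊y⌋₊
  have hn : (n : ℝ) ≤ y := Nat.floor_le hy
  have hn' : y < n + 1 := Nat.lt_floor_add_one y
  have h_out : ∀ k ∉ ({n, n + 1} : Finset ℕ), tent (y - k) = 0 := by
    intro k hk
    simp only [Finset.mem_insert, Finset.mem_singleton, not_or] at hk
    rcases Nat.lt_or_gt_of_ne hk.1 with hkn | hkn
    · have : (k : ℝ) + 1 ≤ n := by exact_mod_cast hkn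
      exact tent_sub_eq_zero_of_add_one_le' (by linarith)
    · have : (n : ℝ) + 2 ≤ k := by exact_mod_cast (by omega : n + 2 ≤ k)
      exact tent_sub_eq_zero_of_add_one_le (by linarith)
  have h_in : ∑ k ∈ ({n, n + 1} : Finset ℕ), tent (y - k) = 1 := by
    have h0 : |y - n| = y - n := abs_of_nonneg (by linarith)
    have h1 : |y - (n + 1)| = n + 1 - y := by rw [abs_of_nonpos (by linarith)]; ring
    rw [Finset.sum_pair (by omega), Nat.cast_add_one, tent_of_abs_le_one (by rw [h0]; linarith),
      tent_of_abs_le_one (by rw [h1]; linarith), h0, h1]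
    ring
  exact h_in ▸ hasSum_sum_of_ne_finset_zero h_out

theorem tent_sub_natCast_mul_sub_nonneg {y c : ℝ} {a : ℕ → ℝ}
    (h : ∀ k : ℕ, y < k + 1 → c ≤ a k) (k : ℕ) : 0 ≤ tent (y - k) * (a k - c) := by
  rcases lt_or_ge y (k + 1) with hk | hk
  · exact mul_nonneg (tent_nonneg _) (sub_nonneg.2 (h k hk))
  · rw [tent_sub_eq_zero_of_add_one_le' hk, zero_mul]

theorem hasSum_tent_sub_natCast_mul_sub {y : ℝ} (hy : 0 ≤ y) (a : ℕ → ℝ) (c : ℝ) :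
    HasSum (fun k : ℕ => tent (y - k) * (a k - c)) ((∑' k : ℕ, tent (y - k) * a k) - c) := by
  have hsummable : Summable fun k : ℕ => tent (y - k) * a k :=
    summable_of_ne_finset_zero (s := Finset.range (⌊y⌋₊ + 2)) fun k hk => by
      rw [Finset.mem_range, not_lt] at hk
      have : (⌊y⌋₊ : ℝ) + 2 ≤ k := by exact_mod_cast hk
      rw [tent_sub_eq_zero_of_add_one_le (by linarith [Nat.lt_floor_add_one y]), zero_mul]
  simpa only [mul_sub, one_mul] using hsummable.hasSum.sub
    ((hasSum_tent_sub_natCast hy).mul_right c)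

theorem le_tsum_tent_sub_natCast_mul {y c : ℝ} (hy : 0 ≤ y) {a : ℕ → ℝ}
    (h : ∀ k : ℕ, y < k + 1 → c ≤ a k) : c ≤ ∑' k : ℕ, tent (y - k) * a k :=
  sub_nonneg.1 ((hasSum_tent_sub_natCast_mul_sub hy a c).nonneg
    (tent_sub_natCast_mul_sub_nonneg h))

end Tent

section Gluing

variable {X : Type*} [TopologicalSpace X] {S : Set X} {x : X → ℝ} {V : ℕ → X → ℝ}

theorem continuousOn_tsum_tent_mul (hx : ContinuousOn x S) (hV : ∀ k, ContinuousOn (V k) S) :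
    ContinuousOn (fun t => ∑' k : ℕ, tent (x t - k) * V k t) S := by
  intro t₀ ht₀
  obtain ⟨N, hN⟩ := exists_nat_gt (x t₀)
  have h_fin : ∀ t, x t < N → ∑' k : ℕ, tent (x t - k) * V k t =
      ∑ k ∈ Finset.range (N + 1), tent (x t - k) * V k t := fun t ht =>
    tsum_eq_sum fun k hk => by
      rw [Finset.mem_range, not_lt] at hk
      have : (N : ℝ) + 1 ≤ k := by exact_mod_cast hk
      rw [tent_sub_eq_zero_of_add_one_le (by linarith), zero_mul]
  refine ContinuousWithinAt.congr_of_eventuallyEq ?_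
    (((hx t₀ ht₀).eventually (gt_mem_nhds hN)).mono h_fin) (h_fin t₀ hN)
  exact continuousOn_finsetSum _ (fun k _ =>
    (continuous_tent.comp_continuousOn (hx.sub continuousOn_const)).mul (hV k)) t₀ ht₀

variable [MeasurableSpace X] [OpensMeasurableSpace X] {μ : Measure X} {u : X → ℝ}
  {K : ℕ → Set X}

theorem integrableOn_tsum_tent_mul_sub (hS : MeasurableSet S) (hx : ContinuousOn x S)
    (hx0 : ∀ t ∈ S, 0 ≤ x t) (hu : AEMeasurable u (μ.restrict S))
    (hV : ∀ k, ContinuousOn (V k) S) (hK : ∀ k, MeasurableSet (K k))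
    (hSK : ∀ k : ℕ, ∀ t ∈ S, x t < k + 1 → t ∈ K k) (huV : ∀ k, ∀ t ∈ K k, u t ≤ V k t)
    (hint : ∀ k, IntegrableOn (fun t => V k t - u t) (K k) μ)
    (hsum : Summable fun k => ∫ t in K k, V k t - u t ∂μ) :
    IntegrableOn (fun t => (∑' k : ℕ, tent (x t - k) * V k t) - u t) S μ := by
  set g : ℕ → X → ℝ := fun k t => tent (x t - k) * (V k t - u t)
  set G : ℕ → X → ℝ := fun k => (K k).indicator fun t => V k t - u t
  have hG0 : ∀ k t, 0 ≤ G k t := fun k =>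
    indicator_nonneg fun t ht => sub_nonneg.2 (huV k t ht)
  have hG_int : ∀ k, Integrable (G k) μ := fun k => (hint k).integrable_indicator (hK k)
  have hg0 : ∀ k, ∀ t ∈ S, 0 ≤ g k t := fun k t ht =>
    tent_sub_natCast_mul_sub_nonneg (fun j hj => huV j t (hSK j t ht hj)) k
  have hg_le : ∀ k, ∀ t ∈ S, g k t ≤ G k t := fun k t ht => by
    rcases lt_or_ge (x t) (k + 1) with hk | hk
    · rw [show G k t = V k t - u t from indicator_of_mem (hSK k t ht hk) _]
      exact mul_le_of_le_one_left (sub_nonneg.2 (huV k t (hSK k t ht hk))) (tent_le_one _)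
    · simp only [g, tent_sub_eq_zero_of_add_one_le' hk, zero_mul]
      exact hG0 k t
  have hg_int : ∀ k, IntegrableOn (g k) S μ := fun k =>
    (hG_int k).integrableOn.mono'
      (((continuous_tent.comp_continuousOn (hx.sub continuousOn_const)).aemeasurable hS).mul
        (((hV k).aemeasurable hS).sub hu)).aestronglyMeasurable
      (ae_restrict_of_forall_mem hS fun t ht => by
        rw [Real.norm_of_nonneg (hg0 k t ht)]; exact hg_le k t ht)
  have hg_integral : ∀ k, ∫ t in S, g k t ∂μ ≤ ∫ t in K k, V k t - u t ∂μ := fun k =>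
    calc ∫ t in S, g k t ∂μ ≤ ∫ t in S, G k t ∂μ :=
          setIntegral_mono_on (hg_int k) (hG_int k).integrableOn hS (hg_le k)
      _ ≤ ∫ t, G k t ∂μ := setIntegral_le_integral (hG_int k) (Eventually.of_forall (hG0 k))
      _ = ∫ t in K k, V k t - u t ∂μ := integral_indicator (hK k)
  exact integrable_of_hasSum_of_nonneg hg_int (fun k => ae_restrict_of_forall_mem hS (hg0 k))
    (ae_restrict_of_forall_mem hS fun t ht => hasSum_tent_sub_natCast_mul_sub (hx0 t ht) _ _)
    (hsum.of_nonneg_of_le (fun k => setIntegral_nonneg hS (hg0 k)) hg_integral)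

end Gluing

theorem continuous_integrable_majorant
    (r₀ : ℝ) (hr₀ : 0 < r₀) (u : ℝ → ℝ)
    (hu_pos : ∀ t ∈ Ioc (0:ℝ) r₀, 0 < u t)
    (hu_usc : UpperSemicontinuousOn u (Ioc 0 r₀)) :
    ∃ w : ℝ → ℝ, ContinuousOn w (Ioc 0 r₀) ∧
      (∀ t ∈ Ioc (0:ℝ) r₀, 0 < u t ∧ u t ≤ w t) ∧
      IntegrableOn (fun t => w t - u t) (Ioo 0 r₀) := by
  set K : ℕ → Set ℝ := fun k => Icc (r₀ / (k + 1)) r₀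
  have hK : ∀ k, K k ⊆ Ioc 0 r₀ := fun k t ht =>
    ⟨(div_pos hr₀ k.cast_add_one_pos).trans_le ht.1, ht.2⟩
  choose V hV_cont hV_ge hV_int hV_le using fun k : ℕ =>
    exists_continuous_majorant_setIntegral_sub_le (μ := volume) isCompact_Icc
      (hu_usc.mono (hK k)) ⟨0, forall_mem_image.2 fun t ht => (hu_pos t (hK k ht)).le⟩
      (pow_pos (one_half_pos : (0 : ℝ) < 1 / 2) k)
  have hx : ContinuousOn (fun t => r₀ / t) (Ioc 0 r₀) :=
    continuousOn_const.div continuousOn_id fun t ht => ht.1.ne'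
  have hx0 : ∀ t ∈ Ioc 0 r₀, 0 ≤ r₀ / t := fun t ht => div_nonneg hr₀.le ht.1.le
  have hxK : ∀ k : ℕ, ∀ t ∈ Ioc 0 r₀, r₀ / t < k + 1 → t ∈ K k := fun k t ht hk =>
    ⟨(div_le_iff₀ (by positivity)).2 (by rw [div_lt_iff₀ ht.1] at hk; linarith), ht.2⟩
  refine ⟨fun t => ∑' k : ℕ, tent (r₀ / t - k) * V k t,
    continuousOn_tsum_tent_mul hx fun k => (hV_cont k).continuousOn,
    fun t ht => ⟨hu_pos t ht, le_tsum_tent_sub_natCast_mul (hx0 t ht) fun k hk =>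
      hV_ge k t (hxK k t ht hk)⟩, ?_⟩
  exact (integrableOn_tsum_tent_mul_sub measurableSet_Ioc hx hx0
    (hu_usc.aemeasurable_restrict measurableSet_Ioc) (fun k => (hV_cont k).continuousOn)
    (fun k => measurableSet_Icc) hxK hV_ge hV_int
    (summable_geometric_two.of_nonneg_of_le (fun k => setIntegral_nonneg measurableSet_Icc
      fun t ht => sub_nonneg.2 (hV_ge k t ht)) hV_le)).mono_set Ioo_subset_Ioc_self
end

section
/- Let K ⊆ E be a compact set such that ∇f x ≠ 0 for every x ∈ K with f x > 0. Then the function t ↦ α^K t is upper semicontinuous at every point of (0, ∞). -/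
open Set MeasureTheory

variable {n : ℕ}

theorem alphaK_upperSemicontinuous (n : ℕ) (hn : 1 ≤ n)
    (f : EuclideanSpace ℝ (Fin n) → ℝ)
    (hf : Continuous f) (hf0 : ∀ x, 0 ≤ f x)
    (hC1 : ContDiffOn ℝ 1 f (f ⁻¹' {0})ᶜ)
    (K : Set (EuclideanSpace ℝ (Fin n))) (hK : IsCompact K)
    (hgrad : ∀ x ∈ K, 0 < f x → gradient f x ≠ 0) :
    ∀ t ∈ Ioi (0:ℝ), UpperSemicontinuousAt (alphaK f K) t := by
  intro t ht y hy
  set U : Set (EuclideanSpace ℝ (Fin n)) := (f ⁻¹' {0})ᶜ with hUdef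
  have hUopen : IsOpen U := (isClosed_singleton.preimage hf).isOpen_compl
  set g : EuclideanSpace ℝ (Fin n) → ℝ := fun x => ‖gradient f x‖⁻¹ with hgdef
  -- continuity of gradient on U
  have hgradcont : ContinuousOn (gradient f) U := by
    have h1 : ContinuousOn (fderiv ℝ f) U := by
      have := hC1.continuousOn_fderivWithin hUopen.uniqueDiffOn le_rfl
      exact this.congr fun x hx => (fderivWithin_of_isOpen hUopen hx).symm
    exact ((InnerProductSpace.toDual ℝ (EuclideanSpace ℝ (Fin n))).symm.continuous.comp_continuousOn h1)
  have hgcontAt : ∀ x ∈ K, 0 < f x → ContinuousAt g x := by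
    intro x hxK hfx
    have hxU : x ∈ U := by
      simp only [hUdef, mem_compl_iff, mem_preimage, mem_singleton_iff]
      exact ne_of_gt hfx
    have h1 : ContinuousAt (gradient f) x := hgradcont.continuousAt (hUopen.mem_nhds hxU)
    exact h1.norm.inv₀ (norm_ne_zero_iff.mpr (hgrad x hxK hfx))
  -- the set at t
  set S : ℝ → Set ℝ := fun s => {y : ℝ | ∃ x ∈ K, f x = s ∧ y = ‖gradient f x‖⁻¹} with hSdef
  have hSimg : ∀ s, S s = g '' (K ∩ f ⁻¹' {s}) := by
    intro s; ext z
    simp only [hSdef, mem_setOf_eq, mem_image, mem_inter_iff, mem_preimage, mem_singleton_iff]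
    constructor
    · rintro ⟨x, hx, h1, h2⟩; exact ⟨x, ⟨hx, h1⟩, h2.symm⟩
    · rintro ⟨x, ⟨hx, h1⟩, h2⟩; exact ⟨x, hx, h1, h2.symm⟩
  have hStbdd : BddAbove (S t) := by
    rw [hSimg]
    have hcomp : IsCompact (K ∩ f ⁻¹' {t}) :=
      hK.inter_right (isClosed_singleton.preimage hf)
    have hcont : ContinuousOn g (K ∩ f ⁻¹' {t}) := by
      intro x hx
      exact ((hgcontAt x hx.1 (hx.2 ▸ ht)).continuousWithinAt)
    exact (hcomp.image_of_continuousOn hcont).bddAbove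
  have halphat : alphaK f K t = sSup (S t) := rfl
  have hnonneg : 0 ≤ alphaK f K t := by
    rw [halphat]
    apply Real.sSup_nonneg
    rintro z ⟨x, _, _, rfl⟩
    positivity
  set y' := (alphaK f K t + y) / 2 with hy'def
  have hy'1 : alphaK f K t < y' := by rw [hy'def]; linarith
  have hy'2 : y' < y := by rw [hy'def]; linarith
  have hy'0 : 0 ≤ y' := by linarith
  -- key claim
  have key : ∃ ε > 0, ∀ x ∈ K, |f x - t| < ε → g x ≤ y' := by
    by_contra h
    push_neg at h
    have hseq : ∀ k : ℕ, ∃ x ∈ K, |f x - t| < 1 / (k + 1) ∧ y' < g x := by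
      intro k
      obtain ⟨x, hx, h1, h2⟩ := h (1 / (k + 1)) (by positivity)
      exact ⟨x, hx, h1, h2⟩
    choose x hxK hxf hxg using hseq
    obtain ⟨x₀, hx₀K, φ, hφ, hlim⟩ := hK.tendsto_subseq hxK
    have hfx₀ : f x₀ = t := by
      have h1 : Filter.Tendsto (fun k => f (x (φ k))) Filter.atTop (nhds (f x₀)) :=
        (hf.continuousAt.tendsto).comp hlim
      have h2 : Filter.Tendsto (fun k => f (x (φ k))) Filter.atTop (nhds t) := by
        rw [tendsto_iff_dist_tendsto_zero]
        apply squeeze_zero (fun k => dist_nonneg) (fun k => ?_)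
          tendsto_one_div_add_atTop_nhds_zero_nat
        calc dist (f (x (φ k))) t = |f (x (φ k)) - t| := rfl
          _ ≤ 1 / (φ k + 1) := le_of_lt (hxf (φ k))
          _ ≤ 1 / (k + 1) := by
              apply one_div_le_one_div_of_le (by positivity)
              have h3 : (k:ℝ) ≤ φ k := Nat.cast_le.mpr hφ.le_apply
              linarith
      exact tendsto_nhds_unique h1 h2
    have hglim : Filter.Tendsto (fun k => g (x (φ k))) Filter.atTop (nhds (g x₀)) :=
      ((hgcontAt x₀ hx₀K (hfx₀ ▸ ht)).tendsto).comp hlim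
    have hge : y' ≤ g x₀ :=
      le_of_tendsto_of_tendsto tendsto_const_nhds hglim
        (Filter.Eventually.of_forall fun k => (hxg (φ k)).le)
    have hmem : g x₀ ∈ S t := ⟨x₀, hx₀K, hfx₀, rfl⟩
    have : g x₀ ≤ alphaK f K t := le_csSup hStbdd hmem
    linarith
  obtain ⟨ε, hε, hkey⟩ := key
  have : ∀ᶠ s in nhds t, |s - t| < ε := by
    have := Metric.ball_mem_nhds t hε
    filter_upwards [this] with s hs
    simpa [Real.dist_eq] using hs
  filter_upwards [this] with s hs
  have : alphaK f K s ≤ y' := by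
    apply Real.sSup_le _ hy'0
    rintro z ⟨x, hxK, hfx, rfl⟩
    exact hkey x hxK (hfx ▸ hs)
  linarith
end

section
/- Suppose there exist ρ > 0 and b : ℝ → ℝ continuous and strictly positive on (0, ρ] such that t ↦ (b t)⁻¹ is NOT Lebesgue integrable on (0, ρ) and ‖∇f x‖ ≤ b (f x) for every x with 0 < f x < ρ. Then for every p ∈ frontier Z there exist no ε > 0 and no curve γ : ℝ → E such that γ 0 = p, γ is continuous on [0, ε), f (γ t) > 0 for every t ∈ (0, ε), γ is differentiable at every t ∈ (0, ε), and ‖deriv γ t‖ ≤ 1 for every t ∈ (0, ε). -/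
open Set MeasureTheory Filter Topology

/-! With `Φ s = ∫ u in s..ρ, (b u)⁻¹`, the chain rule and the gradient bound give
`|(Φ ∘ f ∘ γ)'| ≤ (b (f (γ t)))⁻¹ * b (f (γ t)) * 1 = 1`, so `Φ ∘ f ∘ γ` stays bounded as `t → 0⁺`.
Since `γ 0` lies in the closed set `f ⁻¹' {0}`, `f (γ t) → 0⁺`, so `Φ` is bounded along a sequence
tending to `0⁺`; as `(b u)⁻¹ ≥ 0`, this makes `u ↦ (b u)⁻¹` integrable on `(0, ρ)`. -/

theorem integrableOn_Ioc_of_frequently_intervalIntegral_le {φ : ℝ → ℝ} {a b C : ℝ}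
    (hφ : ContinuousOn φ (Ioc a b)) (hφ0 : ∀ x ∈ Ioc a b, 0 ≤ φ x)
    (h : ∃ᶠ s in 𝓝[>] a, ∫ x in s..b, φ x ≤ C) : IntegrableOn φ (Ioc a b) := by
  rcases le_or_gt b a with hba | hab
  · simp [Ioc_eq_empty_of_le hba]
  obtain ⟨u, hu, hu_spec⟩ :=
    exists_seq_forall_of_frequently (h.and_eventually (Ioo_mem_nhdsGT hab))
  choose hu_le hu_mem using hu_spec
  refine integrableOn_Ioc_of_intervalIntegral_norm_bounded_left (I := C) (fun k => ?_)
    (tendsto_nhds_of_tendsto_nhdsWithin hu) (Eventually.of_forall fun k => ?_)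
  · exact (hφ.mono (Icc_subset_Ioc (hu_mem k).1 le_rfl)).integrableOn_Icc.mono_set
      Ioc_subset_Icc_self
  · calc ∫ x in Ioc (u k) b, ‖φ x‖ = ∫ x in u k..b, φ x := by
          rw [intervalIntegral.integral_of_le (hu_mem k).2.le]
          exact setIntegral_congr_fun measurableSet_Ioc fun x hx =>
            Real.norm_of_nonneg (hφ0 x ⟨(hu_mem k).1.trans hx.1, hx.2⟩)
      _ ≤ C := hu_le k

theorem hasDerivAt_intervalIntegral_left_of_continuousOn {E : Type*} [NormedAddCommGroup E]
    [NormedSpace ℝ E] [CompleteSpace E] {φ : ℝ → E} {a b s : ℝ}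
    (hφ : ContinuousOn φ (Ioc a b)) (hs : s ∈ Ioo a b) :
    HasDerivAt (fun t => ∫ x in t..b, φ x) (-φ s) s := by
  have hsub : uIcc s b ⊆ Ioc a b := by
    simpa [uIcc_of_le hs.2.le] using Icc_subset_Ioc hs.1 le_rfl
  exact intervalIntegral.integral_hasDerivAt_left (hφ.mono hsub).intervalIntegrable
    ((hφ.mono Ioo_subset_Ioc_self).stronglyMeasurableAtFilter isOpen_Ioo s hs)
    (hφ.continuousAt (Ioc_mem_nhds hs.1 hs.2))

theorem norm_comp_sub_le_of_norm_fderiv_le_of_norm_deriv_le_one {E F : Type*}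
    [NormedAddCommGroup E] [NormedSpace ℝ E] [NormedAddCommGroup F] [NormedSpace ℝ F]
    {H : E → F} {γ : ℝ → E} {C s t : ℝ} (hst : s ≤ t) (hγ : ∀ τ ∈ Icc s t, DifferentiableAt ℝ γ τ)
    (hγ' : ∀ τ ∈ Icc s t, ‖deriv γ τ‖ ≤ 1)
    (hH : ∀ τ ∈ Icc s t, ∃ D : E →L[ℝ] F, HasFDerivAt H D (γ τ) ∧ ‖D‖ ≤ C) :
    ‖H (γ t) - H (γ s)‖ ≤ C * (t - s) := by
  choose! D hD hDC using hH
  have hderiv : ∀ τ ∈ Icc s t,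
      HasDerivWithinAt (H ∘ γ) (D τ (deriv γ τ)) (Icc s t) τ := fun τ hτ =>
    ((hD τ hτ).comp_hasDerivAt τ (hγ τ hτ).hasDerivAt).hasDerivWithinAt
  have hbound : ∀ τ ∈ Icc s t, ‖D τ (deriv γ τ)‖ ≤ C := fun τ hτ =>
    calc ‖D τ (deriv γ τ)‖ ≤ C * ‖deriv γ τ‖ := (D τ).le_of_opNorm_le (hDC τ hτ) _
      _ ≤ C * 1 := by gcongr; exacts [(norm_nonneg _).trans (hDC τ hτ), hγ' τ hτ]
      _ = C := mul_one C
  simpa [Real.norm_of_nonneg (sub_nonneg.2 hst)] using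
    (convex_Icc s t).norm_image_sub_le_of_norm_hasDerivWithin_le hderiv hbound
      (left_mem_Icc.2 hst) (right_mem_Icc.2 hst)

theorem exists_hasFDerivAt_intervalIntegral_inv_comp_norm_le_one {E : Type*}
    [NormedAddCommGroup E] [InnerProductSpace ℝ E] [CompleteSpace E] {f : E → ℝ} {b : ℝ → ℝ}
    {ρ : ℝ} {x : E} (hb_cont : ContinuousOn b (Ioc 0 ρ)) (hb_pos : ∀ t ∈ Ioc 0 ρ, 0 < b t)
    (hf : DifferentiableAt ℝ f x) (hx : f x ∈ Ioo 0 ρ) (hgrad : ‖gradient f x‖ ≤ b (f x)) :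
    ∃ D : E →L[ℝ] ℝ, HasFDerivAt (fun y => ∫ u in f y..ρ, (b u)⁻¹) D x ∧ ‖D‖ ≤ 1 := by
  have hbx : 0 < b (f x) := hb_pos _ (Ioo_subset_Ioc_self hx)
  have hΦ := hasDerivAt_intervalIntegral_left_of_continuousOn
    (hb_cont.inv₀ fun t ht => (hb_pos t ht).ne') hx
  refine ⟨_, hΦ.comp_hasFDerivAt x hf.hasFDerivAt, ?_⟩
  have hfderiv : ‖fderiv ℝ f x‖ ≤ b (f x) :=
    (InnerProductSpace.toDual ℝ E).symm.norm_map (fderiv ℝ f x) ▸ hgrad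
  calc ‖(-(b (f x))⁻¹) • fderiv ℝ f x‖ = (b (f x))⁻¹ * ‖fderiv ℝ f x‖ := by
        rw [norm_smul, norm_neg, Real.norm_of_nonneg (inv_nonneg.2 hbx.le)]
    _ ≤ (b (f x))⁻¹ * b (f x) := by gcongr
    _ = 1 := inv_mul_cancel₀ hbx.ne'

theorem no_curve_selection_general (n : ℕ)
    (f : EuclideanSpace ℝ (Fin n) → ℝ)
    (hf : Continuous f)
    (hC1 : ContDiffOn ℝ 1 f (f ⁻¹' {0})ᶜ)
    (ρ : ℝ) (hρ : 0 < ρ)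
    (b : ℝ → ℝ) (hb_cont : ContinuousOn b (Ioc 0 ρ))
    (hb_pos : ∀ t ∈ Ioc (0:ℝ) ρ, 0 < b t)
    (hb_not_int : ¬ IntegrableOn (fun t => (b t)⁻¹) (Ioo 0 ρ))
    (hgrad : ∀ x, 0 < f x → f x < ρ → ‖gradient f x‖ ≤ b (f x)) :
    ∀ p ∈ frontier (f ⁻¹' {0}),
      ¬ ∃ ε > (0:ℝ), ∃ γ : ℝ → EuclideanSpace ℝ (Fin n),
        γ 0 = p ∧ ContinuousOn γ (Ico 0 ε) ∧
        (∀ t ∈ Ioo (0:ℝ) ε, 0 < f (γ t)) ∧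
        (∀ t ∈ Ioo (0:ℝ) ε, DifferentiableAt ℝ γ t) ∧
        (∀ t ∈ Ioo (0:ℝ) ε, ‖deriv γ t‖ ≤ 1) := by
  rintro _ hp ⟨ε, hε, γ, rfl, hγ_cont, hfγ_pos, hγ_diff, hγ_speed⟩
  set Φ : ℝ → ℝ := fun s => ∫ u in s..ρ, (b u)⁻¹
  have hZ : IsClosed (f ⁻¹' {0}) := isClosed_singleton.preimage hf
  have hf_diff : ∀ x, 0 < f x → DifferentiableAt ℝ f x := fun x hx =>
    (hC1.differentiableOn one_ne_zero).differentiableAt (hZ.isOpen_compl.mem_nhds hx.ne')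
  have hfγ : Tendsto (fun t => f (γ t)) (𝓝[>] 0) (𝓝[>] 0) := by
    have hγ0 : f (γ 0) = 0 := hZ.frontier_subset hp
    refine tendsto_nhdsWithin_iff.2 ⟨?_, eventually_of_mem (Ioo_mem_nhdsGT hε) hfγ_pos⟩
    simpa only [Function.comp_def, hγ0] using (hf.tendsto (γ 0)).comp
      ((hγ_cont.continuousWithinAt ⟨le_rfl, hε⟩).mono_of_mem_nhdsWithin (Ico_mem_nhdsGT hε))
  obtain ⟨t₁, ht₁, hsub⟩ := mem_nhdsGT_iff_exists_Ioc_subset.1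
    (inter_mem (Ioo_mem_nhdsGT hε) (hfγ (Ioo_mem_nhdsGT hρ)))
  have hbound : ∀ s ∈ Ioc 0 t₁, Φ (f (γ s)) ≤ Φ (f (γ t₁)) + t₁ := by
    intro s hs
    have hmem : ∀ τ ∈ Icc s t₁, τ ∈ Ioo 0 ε ∧ f (γ τ) ∈ Ioo 0 ρ := fun τ hτ =>
      hsub ⟨hs.1.trans_le hτ.1, hτ.2⟩
    have hlip := norm_comp_sub_le_of_norm_fderiv_le_of_norm_deriv_le_one
      (H := fun x => Φ (f x)) hs.2 (fun τ hτ => hγ_diff τ (hmem τ hτ).1)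
      (fun τ hτ => hγ_speed τ (hmem τ hτ).1) fun τ hτ =>
        exists_hasFDerivAt_intervalIntegral_inv_comp_norm_le_one hb_cont hb_pos
          (hf_diff _ (hmem τ hτ).2.1) (hmem τ hτ).2 (hgrad _ (hmem τ hτ).2.1 (hmem τ hτ).2.2)
    rw [Real.norm_eq_abs, one_mul] at hlip
    linarith [neg_abs_le (Φ (f (γ t₁)) - Φ (f (γ s))), hs.1]
  refine hb_not_int (IntegrableOn.mono_set ?_ Ioo_subset_Ioc_self)
  exact integrableOn_Ioc_of_frequently_intervalIntegral_le
    (hb_cont.inv₀ fun t ht => (hb_pos t ht).ne') (fun t ht => (inv_pos.2 (hb_pos t ht)).le)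
    (hfγ.frequently (eventually_of_mem (Ioc_mem_nhdsGT ht₁) hbound).frequently)

theorem no_curve_selection (n : ℕ) (hn : 1 ≤ n)
    (f : EuclideanSpace ℝ (Fin n) → ℝ)
    (hf : Continuous f) (hf0 : ∀ x, 0 ≤ f x)
    (hZ : (f ⁻¹' {0}).Nonempty)
    (hC1 : ContDiffOn ℝ 1 f (f ⁻¹' {0})ᶜ)
    (ρ : ℝ) (hρ : 0 < ρ)
    (b : ℝ → ℝ) (hb_cont : ContinuousOn b (Ioc 0 ρ))
    (hb_pos : ∀ t ∈ Ioc (0:ℝ) ρ, 0 < b t)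
    (hb_not_int : ¬ IntegrableOn (fun t => (b t)⁻¹) (Ioo 0 ρ))
    (hgrad : ∀ x, 0 < f x → f x < ρ → ‖gradient f x‖ ≤ b (f x)) :
    ∀ p ∈ frontier (f ⁻¹' {0}),
      ¬ ∃ ε > (0:ℝ), ∃ γ : ℝ → EuclideanSpace ℝ (Fin n),
        γ 0 = p ∧ ContinuousOn γ (Ico 0 ε) ∧
        (∀ t ∈ Ioo (0:ℝ) ε, 0 < f (γ t)) ∧
        (∀ t ∈ Ioo (0:ℝ) ε, DifferentiableAt ℝ γ t) ∧
        (∀ t ∈ Ioo (0:ℝ) ε, ‖deriv γ t‖ ≤ 1) :=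
  no_curve_selection_general n f hf hC1 ρ hρ b hb_cont hb_pos hb_not_int hgrad
end

section
/- Let ρ > 0 and let b : ℝ → ℝ be continuous and strictly positive on (0, ρ] with t ↦ (b t)⁻¹ NOT Lebesgue integrable on (0, ρ). Then there exist no ε > 0 and no function g : ℝ → ℝ such that g 0 = 0, g is continuous on [0, ε), 0 < g t ≤ ρ for every t ∈ (0, ε), g is differentiable at every t ∈ (0, ε), and deriv g t ≤ b (g t) for every t ∈ (0, ε). -/
open Set MeasureTheory

theorem osgood_no_growth (ρ : ℝ) (hρ : 0 < ρ)
    (b : ℝ → ℝ) (hb_cont : ContinuousOn b (Ioc 0 ρ))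
    (hb_pos : ∀ t ∈ Ioc (0:ℝ) ρ, 0 < b t)
    (hb_not_int : ¬ IntegrableOn (fun t => (b t)⁻¹) (Ioo 0 ρ)) :
    ¬ ∃ ε > (0:ℝ), ∃ g : ℝ → ℝ,
      g 0 = 0 ∧ ContinuousOn g (Ico 0 ε) ∧
      (∀ t ∈ Ioo (0:ℝ) ε, 0 < g t ∧ g t ≤ ρ) ∧
      (∀ t ∈ Ioo (0:ℝ) ε, DifferentiableAt ℝ g t) ∧
      (∀ t ∈ Ioo (0:ℝ) ε, deriv g t ≤ b (g t)) := by
  rintro ⟨ε, hε, g, hg0, hgc, hgmem, hgdiff, hgderiv⟩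
  -- extend b to a function continuous on Ioi 0
  set c : ℝ → ℝ := fun s => b (min s ρ) with hc_def
  have hmem : ∀ s ∈ Ioi (0:ℝ), min s ρ ∈ Ioc (0:ℝ) ρ := by
    intro s hs; exact ⟨lt_min hs hρ, min_le_right _ _⟩
  have hc_cont : ContinuousOn c (Ioi 0) :=
    hb_cont.comp ((continuous_id.min continuous_const).continuousOn) hmem
  have hc_pos : ∀ s ∈ Ioi (0:ℝ), 0 < c s := fun s hs => hb_pos _ (hmem s hs)
  have hc_eq : ∀ s ∈ Ioc (0:ℝ) ρ, c s = b s := by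
    intro s hs; simp [hc_def, min_eq_left hs.2]
  have hci_cont : ContinuousOn (fun s => (c s)⁻¹) (Ioi 0) := by
    exact hc_cont.inv₀ (fun s hs => (hc_pos s hs).ne')
  set t0 : ℝ := ε / 2 with ht0_def
  have ht0 : t0 ∈ Ioo (0:ℝ) ε := ⟨by positivity, by linarith⟩
  set x0 : ℝ := g t0 with hx0_def
  obtain ⟨hx0_pos, hx0_le⟩ := hgmem t0 ht0
  -- interval integrability
  have hci : ∀ x ∈ Ioi (0:ℝ), IntervalIntegrable (fun s => (c s)⁻¹) volume x x0 := by
    intro x hx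
    apply ContinuousOn.intervalIntegrable
    apply hci_cont.mono
    intro s hs
    exact lt_of_lt_of_le (lt_min hx hx0_pos) (by simpa [min_comm] using hs.1)
  set F : ℝ → ℝ := fun x => ∫ s in x..x0, (c s)⁻¹ with hF_def
  have hF : ∀ x ∈ Ioi (0:ℝ), HasDerivAt F (-(c x)⁻¹) x := by
    intro x hx
    have h1 : HasDerivAt (fun u => ∫ s in x0..u, (c s)⁻¹) ((c x)⁻¹) x := by
      apply intervalIntegral.integral_hasDerivAt_right ((hci x hx).symm)
      · exact ⟨Ioi 0, Ioi_mem_nhds hx, (hci_cont.mono Subset.rfl).aestronglyMeasurable measurableSet_Ioi⟩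
      · exact hci_cont.continuousAt (Ioi_mem_nhds hx)
    have : F = fun u => -(∫ s in x0..u, (c s)⁻¹) := by
      funext u; simp [hF_def, intervalIntegral.integral_symm u x0]
    rw [this]
    exact h1.neg
  -- H is monotone on Ioo 0 ε
  set H : ℝ → ℝ := fun t => F (g t) + t with hH_def
  have hH : ∀ t ∈ Ioo (0:ℝ) ε, HasDerivAt H (-(c (g t))⁻¹ * deriv g t + 1) t := by
    intro t ht
    have hgt := (hgmem t ht).1
    have h1 := (hF (g t) hgt).comp t ((hgdiff t ht).hasDerivAt)
    exact (h1.add (hasDerivAt_id t)).congr_deriv (by ring)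
  have hH_mono : MonotoneOn H (Ioo 0 ε) := by
    apply monotoneOn_of_deriv_nonneg (convex_Ioo 0 ε)
    · intro t ht; exact (hH t ht).continuousAt.continuousWithinAt
    · rw [interior_Ioo]; intro t ht; exact (hH t ht).differentiableAt.differentiableWithinAt
    · rw [interior_Ioo]; intro t ht
      rw [(hH t ht).deriv]
      have hct : 0 < c (g t) := hc_pos _ (hgmem t ht).1
      have hle : deriv g t ≤ c (g t) := by
        rw [hc_eq _ ⟨(hgmem t ht).1, (hgmem t ht).2⟩]; exact hgderiv t ht
      have : (c (g t))⁻¹ * deriv g t ≤ 1 := by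
        rw [← div_eq_inv_mul, div_le_one hct]; exact hle
      linarith
  -- bound F on (0, x0]
  have hFbound : ∀ x ∈ Ioc (0:ℝ) x0, F x ≤ t0 := by
    intro x hx
    -- IVT: find s ∈ (0, t0] with g s = x
    have hIcc : Icc (0:ℝ) x0 ⊆ g '' Icc 0 t0 := by
      have : Icc (g 0) (g t0) ⊆ g '' Icc 0 t0 :=
        intermediate_value_Icc ht0.1.le (hgc.mono (fun u hu => ⟨hu.1, lt_of_le_of_lt hu.2 ht0.2⟩))
      simpa [hg0] using this
    obtain ⟨s, hs, hgs⟩ := hIcc ⟨hx.1.le, hx.2⟩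
    have hs0 : s ≠ 0 := by rintro rfl; rw [hg0] at hgs; exact hx.1.ne hgs
    have hsIoo : s ∈ Ioo (0:ℝ) ε := ⟨lt_of_le_of_ne hs.1 (Ne.symm hs0), lt_of_le_of_lt hs.2 ht0.2⟩
    have := hH_mono hsIoo ht0 hs.2
    have hFx0 : F x0 = 0 := by simp [hF_def]
    simp only [hH_def, hFx0, ← hgs] at this ⊢
    linarith [hsIoo.1]
  -- deduce integrability on Ioc 0 x0
  have hint : IntegrableOn (fun s => (c s)⁻¹) (Ioc 0 x0) := by
    apply integrableOn_Ioc_of_intervalIntegral_norm_bounded_left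
      (I := t0) (a := fun n : ℕ => x0 / (n + 1)) (l := Filter.atTop)
    · intro n
      have hpos : (0:ℝ) < x0 / (n + 1) := by positivity
      have hle : x0 / (n+1) ≤ x0 := by
        rw [div_le_iff₀ (by positivity)]; nlinarith [hx0_pos]
      exact (hci _ hpos).1
    · exact tendsto_const_nhds.div_atTop (Filter.tendsto_atTop_add_const_right _ 1 tendsto_natCast_atTop_atTop)
    · apply Filter.Eventually.of_forall
      intro n
      have hpos : (0:ℝ) < x0 / (n + 1) := by positivity
      have hle : x0 / (n+1) ≤ x0 := by
        rw [div_le_iff₀ (by positivity)]; nlinarith [hx0_pos]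
      have : (∫ s in Ioc (x0 / (n+1)) x0, ‖(c s)⁻¹‖) = F (x0 / (n+1)) := by
        rw [hF_def]
        simp only
        rw [intervalIntegral.integral_of_le hle]
        apply setIntegral_congr_fun measurableSet_Ioc
        intro s hs
        exact Real.norm_of_nonneg (le_of_lt (inv_pos.2 (hc_pos s (lt_of_lt_of_le hpos hs.1.le))))
      rw [this]
      exact hFbound _ ⟨hpos, hle⟩
  -- contradiction with non-integrability
  apply hb_not_int
  have hint2 : IntegrableOn (fun s => (c s)⁻¹) (Icc x0 ρ) := by
    apply ContinuousOn.integrableOn_compact isCompact_Icc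
    exact hci_cont.mono (fun s hs => lt_of_lt_of_le hx0_pos hs.1)
  have hint3 : IntegrableOn (fun s => (c s)⁻¹) (Ioo 0 ρ) := by
    apply (hint.union hint2).mono_set
    intro s hs
    rcases le_or_gt s x0 with h | h
    · exact Or.inl ⟨hs.1, h⟩
    · exact Or.inr ⟨h.le, hs.2.le⟩
  apply hint3.congr_fun _ measurableSet_Ioo
  intro s hs
  simp only []
  rw [hc_eq s ⟨hs.1, hs.2.le⟩]
end

section
/- Let δ > 0 and let f : ℝ → ℝ be continuous on [0, δ] with f 0 = 0, differentiable at every point of (0, δ] with deriv f x > 0 for all x ∈ (0, δ], and with deriv f continuous on (0, δ]. Then there exist ρ > 0 and Ψ : ℝ → ℝ with Ψ 0 = 0, Ψ continuous on [0, ρ), Ψ differentiable at every point of (0, ρ) with deriv Ψ t > 0 for t ∈ (0, ρ), such that deriv Ψ (f x) * |deriv f x| ≥ 1 for every x ∈ (0, δ] with 0 < f x < ρ. -/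
open Set MeasureTheory

theorem one_dim_simple_nondeg_is_KL (δ : ℝ) (hδ : 0 < δ)
    (f : ℝ → ℝ) (hf_cont : ContinuousOn f (Icc 0 δ)) (hf0 : f 0 = 0)
    (hf_diff : ∀ x ∈ Ioc (0:ℝ) δ, DifferentiableAt ℝ f x)
    (hf_deriv_pos : ∀ x ∈ Ioc (0:ℝ) δ, 0 < deriv f x)
    (hf_deriv_cont : ContinuousOn (deriv f) (Ioc 0 δ)) :
    ∃ ρ > (0:ℝ), ∃ Ψ : ℝ → ℝ, Ψ 0 = 0 ∧ ContinuousOn Ψ (Ico 0 ρ) ∧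
      (∀ t ∈ Ioo (0:ℝ) ρ, DifferentiableAt ℝ Ψ t) ∧
      (∀ t ∈ Ioo (0:ℝ) ρ, 0 < deriv Ψ t) ∧
      ∀ x ∈ Ioc (0:ℝ) δ, 0 < f x → f x < ρ → 1 ≤ deriv Ψ (f x) * |deriv f x| := by
  -- f is strictly monotone on [0, δ]
  have hmono : StrictMonoOn f (Icc 0 δ) := by
    apply strictMonoOn_of_deriv_pos (convex_Icc 0 δ) hf_cont
    intro x hx
    rw [interior_Icc] at hx
    exact hf_deriv_pos x ⟨hx.1, hx.2.le⟩
  have hinj : InjOn f (Icc 0 δ) := hmono.injOn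
  set ρ := f δ with hρdef
  have hρpos : 0 < ρ := by
    have := hmono (left_mem_Icc.2 hδ.le) (right_mem_Icc.2 hδ.le) hδ
    rwa [hf0] at this
  -- image of f on Icc 0 δ is Icc 0 ρ
  have himg : f '' Icc 0 δ = Icc 0 ρ := by
    apply Subset.antisymm
    · rintro _ ⟨x, hx, rfl⟩
      exact ⟨hf0 ▸ hmono.monotoneOn (left_mem_Icc.2 hδ.le) hx hx.1,
        hmono.monotoneOn hx (right_mem_Icc.2 hδ.le) hx.2⟩
    · have := intermediate_value_Icc hδ.le hf_cont
      rwa [hf0] at this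
  set g := Function.invFunOn f (Icc 0 δ) with hgdef
  have hgmem : ∀ t ∈ Icc 0 ρ, g t ∈ Icc 0 δ := by
    intro t ht
    have : t ∈ f '' Icc 0 δ := himg ▸ ht
    exact Function.invFunOn_mem (by rcases this with ⟨x, hx, rfl⟩; exact ⟨x, hx, rfl⟩)
  have hfg : ∀ t ∈ Icc 0 ρ, f (g t) = t := by
    intro t ht
    have : t ∈ f '' Icc 0 δ := himg ▸ ht
    rcases this with ⟨x, hx, rfl⟩
    exact Function.invFunOn_eq ⟨x, hx, rfl⟩
  have hgf : ∀ x ∈ Icc 0 δ, g (f x) = x := fun x hx => hinj.leftInvOn_invFunOn hx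
  have hg0 : g 0 = 0 := by
    have := hgf 0 (left_mem_Icc.2 hδ.le)
    rwa [hf0] at this
  -- g is strictly monotone on Icc 0 ρ
  have hgmono : StrictMonoOn g (Icc 0 ρ) := by
    intro t1 h1 t2 h2 hlt
    by_contra h
    push_neg at h
    have := hmono.monotoneOn (hgmem t2 h2) (hgmem t1 h1) h
    rw [hfg t1 h1, hfg t2 h2] at this
    exact absurd hlt (not_lt.2 this)
  -- g image
  have hgimg : g '' Icc 0 ρ = Icc 0 δ := by
    apply Subset.antisymm
    · rintro _ ⟨t, ht, rfl⟩; exact hgmem t ht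
    · intro x hx
      exact ⟨f x, himg ▸ mem_image_of_mem f hx, hgf x hx⟩
  -- interior points map to Ioo
  have hgmem' : ∀ t ∈ Ioo (0:ℝ) ρ, g t ∈ Ioo 0 δ := by
    intro t ht
    have h1 := hgmem t ⟨ht.1.le, ht.2.le⟩
    refine ⟨lt_of_le_of_ne h1.1 ?_, lt_of_le_of_ne h1.2 ?_⟩
    · intro h
      have := hfg t ⟨ht.1.le, ht.2.le⟩
      rw [← h, hf0] at this
      exact ht.1.ne this
    · intro h
      have := hfg t ⟨ht.1.le, ht.2.le⟩
      rw [h] at this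
      exact ht.2.ne this.symm
  -- continuity of g at interior points
  have hgcont : ∀ t ∈ Ioo (0:ℝ) ρ, ContinuousAt g t := by
    intro t ht
    apply hgmono.continuousAt_of_image_mem_nhds (s := Icc 0 ρ)
      (Icc_mem_nhds ht.1 ht.2)
    rw [hgimg]
    exact Icc_mem_nhds (hgmem' t ht).1 (hgmem' t ht).2
  -- continuity on Ico 0 ρ
  have hgcontOn : ContinuousOn g (Ico 0 ρ) := by
    intro t ht
    rcases eq_or_lt_of_le ht.1 with h0 | h0
    · -- t = 0 : right continuity
      subst h0
      have h1 : Icc (0:ℝ) ρ ∈ nhdsWithin 0 (Ici 0) :=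
        Icc_mem_nhdsGE_of_mem ⟨le_refl 0, hρpos⟩
      have h2 : g '' Icc 0 ρ ∈ nhdsWithin (g 0) (Ici (g 0)) := by
        rw [hgimg, hg0]
        exact Icc_mem_nhdsGE_of_mem ⟨le_refl 0, hδ⟩
      have := hgmono.continuousWithinAt_right_of_image_mem_nhdsWithin h1 h2
      exact this.mono Ico_subset_Ici_self
    · exact (hgcont t ⟨h0, ht.2⟩).continuousWithinAt
  -- derivative of g
  have hgderiv : ∀ t ∈ Ioo (0:ℝ) ρ, HasDerivAt g (deriv f (g t))⁻¹ t := by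
    intro t ht
    have hx := hgmem' t ht
    have hxIoc : g t ∈ Ioc (0:ℝ) δ := ⟨hx.1, hx.2.le⟩
    refine HasDerivAt.of_local_left_inverse (hgcont t ht)
      ((hf_diff _ hxIoc).hasDerivAt) (hf_deriv_pos _ hxIoc).ne' ?_
    filter_upwards [Ioo_mem_nhds ht.1 ht.2] with y hy
    exact hfg y ⟨hy.1.le, hy.2.le⟩
  refine ⟨ρ, hρpos, g, hg0, hgcontOn, fun t ht => (hgderiv t ht).differentiableAt,
    fun t ht => ?_, fun x hx hfx1 hfx2 => ?_⟩
  · rw [(hgderiv t ht).deriv]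
    exact inv_pos.2 (hf_deriv_pos _ ⟨(hgmem' t ht).1, (hgmem' t ht).2.le⟩)
  · have hxIcc : x ∈ Icc 0 δ := ⟨hx.1.le, hx.2⟩
    have htmem : f x ∈ Ioo (0:ℝ) ρ := ⟨hfx1, hfx2⟩
    have := (hgderiv (f x) htmem).deriv
    rw [hgf x hxIcc] at this
    rw [this, abs_of_pos (hf_deriv_pos x hx),
      inv_mul_cancel₀ (hf_deriv_pos x hx).ne']
end

section
/- Let Ω ⊆ E be open, let X : Ω → E, and let h : Ω → ℝ be continuous on Ω with h x > 0 for all x ∈ Ω. Let a < 0 < b and let φ : ℝ → E satisfy φ t ∈ Ω and HasDerivAt φ (X (φ t)) t for every t ∈ (a, b). Define θ : ℝ → ℝ by θ t := ∫ r in (0, t), (h (φ r))⁻¹ (with the convention θ t = −∫ r in (t, 0), (h (φ r))⁻¹ for t < 0). Then: θ is strictly increasing on (a, b) and differentiable there with deriv θ t = (h (φ t))⁻¹; θ maps (a, b) bijectively onto an open interval J; and the composition ψ := φ ∘ θ⁻¹ (where θ⁻¹ : J → (a, b) is the inverse of the restriction of θ) satisfies HasDerivAt ψ (h (ψ s) •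 X (ψ s)) s for every s ∈ J. -/
/-!
By the fundamental theorem of calculus `θ' = (h ∘ φ)⁻¹ > 0`, so `θ` is a strictly increasing
continuous map of `(a, b)` onto an open interval. Its inverse `σ` is then continuous, and the
inverse function rule gives `σ' = h ∘ φ ∘ σ`; the chain rule finishes.
-/

open Set Function

theorem hasDerivAt_integral_of_continuousOn_Ioo {E : Type*} [NormedAddCommGroup E]
    [NormedSpace ℝ E] [CompleteSpace E] {g : ℝ → E} {a b c t : ℝ}
    (hg : ContinuousOn g (Ioo a b)) (hc : c ∈ Ioo a b) (ht : t ∈ Ioo a b) :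
    HasDerivAt (fun u => ∫ r in c..u, g r) (g t) t :=
  intervalIntegral.integral_hasDerivAt_right
    (hg.mono (ordConnected_Ioo.uIcc_subset hc ht)).intervalIntegrable
    (hg.stronglyMeasurableAtFilter isOpen_Ioo t ht) (hg.continuousAt (isOpen_Ioo.mem_nhds ht))

section StrictMonoOn

variable {α β : Type*}

theorem StrictMonoOn.isOpen_image_Ioo [ConditionallyCompleteLinearOrder α] [TopologicalSpace α]
    [OrderTopology α] [DenselyOrdered α] [LinearOrder β] [TopologicalSpace β] [OrderTopology β]
    {f : α → β} {a b : α} (hf : StrictMonoOn f (Ioo a b)) (hcont : ContinuousOn f (Ioo a b)) :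
    IsOpen (f '' Ioo a b) := by
  rw [isOpen_iff_mem_nhds]
  rintro _ ⟨t, ht, rfl⟩
  obtain ⟨t₁, hat₁, ht₁t⟩ := exists_between ht.1
  obtain ⟨t₂, htt₂, ht₂b⟩ := exists_between ht.2
  have hsub : Icc t₁ t₂ ⊆ Ioo a b := Icc_subset_Ioo hat₁ ht₂b
  have hmem₁ : t₁ ∈ Ioo a b := hsub (left_mem_Icc.2 (ht₁t.trans htt₂).le)
  have hmem₂ : t₂ ∈ Ioo a b := hsub (right_mem_Icc.2 (ht₁t.trans htt₂).le)
  refine Filter.mem_of_superset (Ioo_mem_nhds (hf hmem₁ ht ht₁t) (hf ht hmem₂ htt₂)) ?_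
  calc Ioo (f t₁) (f t₂) ⊆ f '' Ioo t₁ t₂ :=
        intermediate_value_Ioo (ht₁t.trans htt₂).le (hcont.mono hsub)
    _ ⊆ f '' Ioo a b := image_mono (Ioo_subset_Icc_self.trans hsub)

theorem StrictMonoOn.strictMonoOn_invFunOn [LinearOrder α] [Nonempty α] [LinearOrder β]
    {f : α → β} {s : Set α} (hf : StrictMonoOn f s) : StrictMonoOn (invFunOn f s) (f '' s) := by
  rintro _ ⟨x, hx, rfl⟩ _ ⟨y, hy, rfl⟩ hlt
  rw [hf.injOn.leftInvOn_invFunOn hx, hf.injOn.leftInvOn_invFunOn hy]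
  exact (hf.lt_iff_lt hx hy).1 hlt

theorem StrictMonoOn.continuousAt_invFunOn [LinearOrder α] [Nonempty α] [TopologicalSpace α]
    [OrderTopology α] [DenselyOrdered α] [LinearOrder β] [TopologicalSpace β] [OrderTopology β]
    {f : α → β} {s : Set α} (hf : StrictMonoOn f s) (hs : IsOpen s) (hfs : IsOpen (f '' s))
    {x : α} (hx : x ∈ s) : ContinuousAt (invFunOn f s) (f x) := by
  refine hf.strictMonoOn_invFunOn.continuousAt_of_image_mem_nhds (hfs.mem_nhds ⟨x, hx, rfl⟩) ?_
  rw [hf.injOn.invFunOn_image subset_rfl, hf.injOn.leftInvOn_invFunOn hx]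
  exact hs.mem_nhds hx

end StrictMonoOn

theorem StrictMonoOn.hasDerivAt_invFunOn_Ioo {f f' : ℝ → ℝ} {a b t : ℝ}
    (hf : StrictMonoOn f (Ioo a b)) (hderiv : ∀ x ∈ Ioo a b, HasDerivAt f (f' x) x)
    (ht : t ∈ Ioo a b) (hf' : f' t ≠ 0) :
    HasDerivAt (invFunOn f (Ioo a b)) (f' t)⁻¹ (f t) := by
  have hcont : ContinuousOn f (Ioo a b) := fun x hx =>
    (hderiv x hx).continuousAt.continuousWithinAt
  have hopen := hf.isOpen_image_Ioo hcont
  have hleft := hf.injOn.leftInvOn_invFunOn ht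
  refine HasDerivAt.of_local_left_inverse (hf.continuousAt_invFunOn isOpen_Ioo hopen ht)
    (by rw [hleft]; exact hderiv t ht) hf' ?_
  filter_upwards [hopen.mem_nhds ⟨t, ht, rfl⟩] with y hy
  exact invFunOn_eq hy

theorem time_reparametrization_general (n : ℕ)
    (Ω : Set (EuclideanSpace ℝ (Fin n)))
    (X : EuclideanSpace ℝ (Fin n) → EuclideanSpace ℝ (Fin n))
    (h : EuclideanSpace ℝ (Fin n) → ℝ)
    (hh_cont : ContinuousOn h Ω) (hh_pos : ∀ x ∈ Ω, 0 < h x)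
    (a b : ℝ) (ha : a < 0) (hb : 0 < b)
    (φ : ℝ → EuclideanSpace ℝ (Fin n))
    (hφΩ : ∀ t ∈ Ioo a b, φ t ∈ Ω)
    (hφflow : ∀ t ∈ Ioo a b, HasDerivAt φ (X (φ t)) t) :
    StrictMonoOn (fun t => ∫ r in (0:ℝ)..t, (h (φ r))⁻¹) (Ioo a b) ∧
    (∀ t ∈ Ioo a b,
      HasDerivAt (fun t => ∫ r in (0:ℝ)..t, (h (φ r))⁻¹) ((h (φ t))⁻¹) t) ∧
    ∃ J : Set ℝ, IsOpen J ∧ IsPreconnected J ∧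
      (fun t => ∫ r in (0:ℝ)..t, (h (φ r))⁻¹) '' Ioo a b = J ∧
      InjOn (fun t => ∫ r in (0:ℝ)..t, (h (φ r))⁻¹) (Ioo a b) ∧
      ∃ σ : ℝ → ℝ,
        (∀ t ∈ Ioo a b, σ (∫ r in (0:ℝ)..t, (h (φ r))⁻¹) = t) ∧
        (∀ s ∈ J, σ s ∈ Ioo a b ∧ (∫ r in (0:ℝ)..(σ s), (h (φ r))⁻¹) = s) ∧
        ∀ s ∈ J, HasDerivAt (φ ∘ σ) (h (φ (σ s)) • X (φ (σ s))) s := by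
  set θ : ℝ → ℝ := fun t => ∫ r in (0:ℝ)..t, (h (φ r))⁻¹
  have hpos : ∀ t ∈ Ioo a b, 0 < (h (φ t))⁻¹ := fun t ht => inv_pos.2 (hh_pos _ (hφΩ t ht))
  have hφcont : ContinuousOn φ (Ioo a b) := fun t ht =>
    (hφflow t ht).continuousAt.continuousWithinAt
  have hderiv : ∀ t ∈ Ioo a b, HasDerivAt θ (h (φ t))⁻¹ t :=
    fun t ht => hasDerivAt_integral_of_continuousOn_Ioo
      ((hh_cont.comp hφcont hφΩ).inv₀ fun t ht => (hh_pos _ (hφΩ t ht)).ne') ⟨ha, hb⟩ ht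
  have hθcont : ContinuousOn θ (Ioo a b) := fun t ht =>
    (hderiv t ht).continuousAt.continuousWithinAt
  have hmono : StrictMonoOn θ (Ioo a b) :=
    strictMonoOn_of_hasDerivWithinAt_pos (convex_Ioo a b) hθcont
      (by simpa only [interior_Ioo] using fun t ht => (hderiv t ht).hasDerivWithinAt)
      (by simpa only [interior_Ioo] using hpos)
  have hleft : LeftInvOn (invFunOn θ (Ioo a b)) θ (Ioo a b) := hmono.injOn.leftInvOn_invFunOn
  refine ⟨hmono, hderiv, _, hmono.isOpen_image_Ioo hθcont, isPreconnected_Ioo.image _ hθcont,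
    rfl, hmono.injOn, invFunOn θ (Ioo a b), hleft, ?_, ?_⟩
  · rintro _ ⟨t, ht, rfl⟩
    rw [hleft ht]
    exact ⟨ht, rfl⟩
  · rintro _ ⟨t, ht, rfl⟩
    have hσ := hmono.hasDerivAt_invFunOn_Ioo hderiv ht (hpos t ht).ne'
    have hφ : HasDerivAt φ (X (φ t)) (invFunOn θ (Ioo a b) (θ t)) := by
      rw [hleft ht]; exact hφflow t ht
    rw [inv_inv] at hσ
    rw [hleft ht]
    exact hφ.scomp _ hσ

theorem time_reparametrization (n : ℕ) (hn : 1 ≤ n)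
    (Ω : Set (EuclideanSpace ℝ (Fin n))) (hΩ : IsOpen Ω)
    (X : EuclideanSpace ℝ (Fin n) → EuclideanSpace ℝ (Fin n))
    (h : EuclideanSpace ℝ (Fin n) → ℝ)
    (hh_cont : ContinuousOn h Ω) (hh_pos : ∀ x ∈ Ω, 0 < h x)
    (a b : ℝ) (ha : a < 0) (hb : 0 < b)
    (φ : ℝ → EuclideanSpace ℝ (Fin n))
    (hφΩ : ∀ t ∈ Ioo a b, φ t ∈ Ω)
    (hφflow : ∀ t ∈ Ioo a b, HasDerivAt φ (X (φ t)) t) :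
    StrictMonoOn (fun t => ∫ r in (0:ℝ)..t, (h (φ r))⁻¹) (Ioo a b) ∧
    (∀ t ∈ Ioo a b,
      HasDerivAt (fun t => ∫ r in (0:ℝ)..t, (h (φ r))⁻¹) ((h (φ t))⁻¹) t) ∧
    ∃ J : Set ℝ, IsOpen J ∧ IsPreconnected J ∧
      (fun t => ∫ r in (0:ℝ)..t, (h (φ r))⁻¹) '' Ioo a b = J ∧
      InjOn (fun t => ∫ r in (0:ℝ)..t, (h (φ r))⁻¹) (Ioo a b) ∧
      ∃ σ : ℝ → ℝ,
        (∀ t ∈ Ioo a b, σ (∫ r in (0:ℝ)..t, (h (φ r))⁻¹) = t) ∧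
        (∀ s ∈ J, σ s ∈ Ioo a b ∧ (∫ r in (0:ℝ)..(σ s), (h (φ r))⁻¹) = s) ∧
        ∀ s ∈ J, HasDerivAt (φ ∘ σ) (h (φ (σ s)) • X (φ (σ s))) s :=
  time_reparametrization_general n Ω X h hh_cont hh_pos a b ha hb φ hφΩ hφflow
end
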